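/- arXiv:2005.09789 — 8 statements merged into one kernel-verified Lean document; each statement's English description precedes it below -/
import Mathlib

section
/- Let Cat denote the category of small categories and functors, and let τ : Cat ⥤ C̄at be the quotient functor to the category C̄at having the same objects as Cat and whose morphisms are natural-isomorphism classes of functors (τ is the identity on objects and sends a functor to its isomorphism class). Then for every category 𝒞 and every functor γ : Cat ⥤ 𝒞 that inverts all equivalences (i.e. γ sends every functor which is an equivalence of categories to an isomorphism of 𝒞), there exists a functor γ' : C̄at ⥤ 𝒞 with γ' ∘ τ = γ, and such a γ' is unique. -/
open CategoryTheory

universe w z v u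

namespace Paper

/-- The category `C̄at`: same objects as `Cat`, morphisms are natural-isomorphism
classes of functors. -/
def BarCat : Type (max (v + 1) (u + 1)) := Cat.{v, u}

/-- The underlying small category of an object of `C̄at`. -/
def BarCat.toCat (X : BarCat.{v, u}) : Cat.{v, u} := X

instance : Category.{max v u} BarCat.{v, u} where
  Hom X Y := Quotient (isIsomorphicSetoid (↑X.toCat ⥤ ↑Y.toCat))
  id X := Quotient.mk _ (𝟭 ↑X.toCat)
  comp {X Y Z} F G :=
    Quotient.lift₂ (fun (F : ↑X.toCat ⥤ ↑Y.toCat) (G : ↑Y.toCat ⥤ ↑Z.toCat) =>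
        Quotient.mk (isIsomorphicSetoid (↑X.toCat ⥤ ↑Z.toCat)) (F ⋙ G))
      (fun F₀ G₀ F₁ G₁ hF hG => Quotient.sound
        ⟨Functor.isoWhiskerRight (Nonempty.some hF) G₀ ≪≫ Functor.isoWhiskerLeft F₁ (Nonempty.some hG)⟩) F G
  id_comp {X Y} F := by
    induction F using Quotient.inductionOn with
    | h F => exact Quotient.sound ⟨F.leftUnitor⟩
  comp_id {X Y} F := by
    induction F using Quotient.inductionOn with
    | h F => exact Quotient.sound ⟨F.rightUnitor⟩
  assoc {W X Y Z} F G H := by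
    induction F using Quotient.inductionOn with
    | h F =>
      induction G using Quotient.inductionOn with
      | h G =>
        induction H using Quotient.inductionOn with
        | h H => exact Quotient.sound ⟨Functor.associator F G H⟩

/-- The quotient functor `τ : Cat ⥤ C̄at`: identity on objects, sending a functor
to its natural-isomorphism class. -/
def tau : Cat.{v, u} ⥤ BarCat.{v, u} where
  obj X := X
  map {X Y} F := Quotient.mk (isIsomorphicSetoid (↑X ⥤ ↑Y)) F.toFunctor
  map_id X := rfl
  map_comp F G := rfl

/-! A natural isomorphism `α : F ≅ G` of functors `C ⥤ D` gives a functor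
`C × WalkingIso ⥤ D` restricting to `F` and `G` at the two ends. The projection
`C × WalkingIso ⥤ C` is an equivalence having both end inclusions as sections, so any functor
out of `Cat` inverting equivalences identifies the two inclusions, hence identifies `F` and `G`,
and therefore factors through `τ`; uniquely, since `τ` is the identity on objects and surjective
on hom-sets. -/

instance isEquivalence_prodFst_codiscrete {C : Type*} [Category C] (A : Type*) [Nonempty A] :
    (CategoryTheory.Prod.fst C (Codiscrete A)).IsEquivalence where
  faithful := ⟨fun h => Prod.ext h (Subsingleton.elim _ _)⟩
  full := ⟨fun f => ⟨(f, ⟨⟩), rfl⟩⟩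
  essSurj := ⟨fun c => ⟨(c, ⟨Classical.arbitrary A⟩), ⟨Iso.refl c⟩⟩⟩

section Cylinder

variable {C : Type u} [Category.{v} C] {D : Type*} [Category D] {F G : C ⥤ D}

def cylinder (α : F ≅ G) : C × WalkingIso.{u} ⥤ D :=
  Functor.uncurry.obj (WalkingIso.fromIso α).flip

lemma sectL_zero_comp_cylinder (α : F ≅ G) : Prod.sectL C WalkingIso.zero ⋙ cylinder α = F :=
  CategoryTheory.Functor.ext (fun _ => rfl) (fun _ _ f => by
    change F.map f ≫ 𝟙 _ = 𝟙 _ ≫ F.map f ≫ 𝟙 _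
    rw [Category.id_comp])

lemma sectL_one_comp_cylinder (α : F ≅ G) : Prod.sectL C WalkingIso.one ⋙ cylinder α = G :=
  CategoryTheory.Functor.ext (fun _ => rfl) (fun _ _ f => by
    change G.map f ≫ 𝟙 _ = 𝟙 _ ≫ G.map f ≫ 𝟙 _
    rw [Category.id_comp])

end Cylinder

def equivalences : MorphismProperty Cat.{v, u} := fun _ _ F => F.toFunctor.IsEquivalence

section InvertingEquivalences

variable {𝒞 : Type w} [Category.{z} 𝒞] {γ : Cat.{v, u} ⥤ 𝒞}

lemma map_sectL_zero_eq_map_sectL_one (hγ : equivalences.IsInvertedBy γ) (I : Cat.{v, u}) :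
    γ.map (Prod.sectL I WalkingIso.zero).toCatHom =
      γ.map (Prod.sectL I WalkingIso.one).toCatHom := by
  let fst := (CategoryTheory.Prod.fst I WalkingIso.{u}).toCatHom
  have : IsIso (γ.map fst) := hγ fst (isEquivalence_prodFst_codiscrete _)
  rw [← cancel_mono (γ.map fst), ← γ.map_comp, ← γ.map_comp]
  rfl

lemma map_eq_map_of_iso (hγ : equivalences.IsInvertedBy γ) {I I' : Cat.{v, u}} {F G : I ⟶ I'}
    (α : F.toFunctor ≅ G.toFunctor) : γ.map F = γ.map G := by
  let s₀ : I ⟶ Cat.of (I × WalkingIso.{u}) := (Prod.sectL I WalkingIso.zero).toCatHom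
  let s₁ : I ⟶ Cat.of (I × WalkingIso.{u}) := (Prod.sectL I WalkingIso.one).toCatHom
  let c : Cat.of (I × WalkingIso.{u}) ⟶ I' := (cylinder α).toCatHom
  calc γ.map F = γ.map s₀ ≫ γ.map c := by
        rw [← γ.map_comp]; exact congrArg γ.map (Cat.ext (sectL_zero_comp_cylinder α)).symm
    _ = γ.map s₁ ≫ γ.map c :=
        congrArg (· ≫ γ.map c) (map_sectL_zero_eq_map_sectL_one hγ I)
    _ = γ.map G := by
        rw [← γ.map_comp]; exact congrArg γ.map (Cat.ext (sectL_one_comp_cylinder α))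

variable (γ) in
def lift (hγ : equivalences.IsInvertedBy γ) : BarCat.{v, u} ⥤ 𝒞 where
  obj X := γ.obj X.toCat
  map := Quotient.lift (fun F => γ.map F.toCatHom) fun _ _ ⟨α⟩ => map_eq_map_of_iso hγ α
  map_id X := γ.map_id X.toCat
  map_comp f g := by
    induction f using Quotient.inductionOn
    induction g using Quotient.inductionOn
    exact γ.map_comp _ _

lemma tau_comp_lift (hγ : equivalences.IsInvertedBy γ) : tau ⋙ lift γ hγ = γ := rfl

end InvertingEquivalences

lemma functor_ext_of_tau_comp_eq {𝒞 : Type w} [Category.{z} 𝒞]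
    {Φ Ψ : BarCat.{v, u} ⥤ 𝒞} (h : tau ⋙ Φ = tau ⋙ Ψ) : Φ = Ψ :=
  CategoryTheory.Functor.ext (fun X => Functor.congr_obj h X.toCat) fun _ _ f =>
    Quotient.inductionOn f fun F => Functor.congr_hom h F.toCatHom

/-- Every functor `γ : Cat ⥤ 𝒞` that inverts all equivalences of
small categories factors uniquely through the quotient functor `τ : Cat ⥤ C̄at`. -/
theorem stmt0 {𝒞 : Type w} [Category.{z} 𝒞] (γ : Cat.{v, u} ⥤ 𝒞)
    (hγ : ∀ {I I' : Cat.{v, u}} (F : I ⟶ I'),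
      (F.toFunctor : ↑I ⥤ ↑I').IsEquivalence → IsIso (γ.map F)) :
    ∃! γ' : BarCat.{v, u} ⥤ 𝒞, tau ⋙ γ' = γ := by
  have hγ' : equivalences.IsInvertedBy γ := fun _ _ F hF => hγ F hF
  refine ⟨lift γ hγ', tau_comp_lift hγ', fun γ' h => ?_⟩
  exact functor_ext_of_tau_comp_eq (h.trans (tau_comp_lift hγ').symm)

end Paper
end

section
/- Let 𝒞 be a category and γ : Cat ⥤ 𝒞 a functor from the category of small categories that sends every functor which is an equivalence of categories to an isomorphism of 𝒞. Then γ identifies naturally isomorphic functors: for any small categories I, I' and any functors F₀, F₁ : I ⥤ I' admitting a natural isomorphism F₀ ≅ F₁, one has γ(F₀) = γ(F₁) as morphisms γ(I) ⟶ γ(I') in 𝒞. -/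
/-!
A natural isomorphism `e : F₀ ≅ F₁` is the same as a functor `H` out of the cylinder
`WalkingIso × I` restricting to `F₀` and `F₁` on the two ends. Both end inclusions are sections
of the projection `WalkingIso × I ⥤ I`, which is an equivalence because `WalkingIso` is
codiscrete and nonempty. So `γ` inverts the projection, hence identifies the two inclusions,
and therefore `γ F₀ = γ F₁` after composing with `γ H`.
-/

open CategoryTheory

universe w z v u

namespace CategoryTheory

instance Codiscrete.isEquivalence_prodSnd (A : Type*) [Nonempty A] (C : Type*) [Category C] :
    (Prod.snd (Codiscrete A) C).IsEquivalence where
  faithful := ⟨fun h => Prod.ext rfl h⟩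
  full := ⟨fun f => ⟨((), f), rfl⟩⟩
  essSurj := ⟨fun X => ⟨(.mk (Classical.arbitrary A), X), ⟨Iso.refl _⟩⟩⟩

lemma Prod.sectR_comp_uncurry_obj {C D E : Type*} [Category C] [Category D] [Category E]
    (F : C ⥤ D ⥤ E) (c : C) : Prod.sectR c D ⋙ Functor.uncurry.obj F = F.obj c :=
  congr_arg (·.obj c) (Functor.curry_obj_uncurry_obj F)

end CategoryTheory

/-- If a functor `γ : Cat ⥤ 𝒞` sends every equivalence of small
categories to an isomorphism, then `γ` identifies naturally isomorphic functors:
for functors `F₀ F₁ : I ⥤ I'` admitting a natural isomorphism `F₀ ≅ F₁`, one has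
`γ.map F₀ = γ.map F₁`. -/
theorem stmt1 {𝒞 : Type w} [Category.{z} 𝒞] (γ : Cat.{v, u} ⥤ 𝒞)
    (hγ : ∀ {I I' : Cat.{v, u}} (F : I ⟶ I'), (F.toFunctor : ↑I ⥤ ↑I').IsEquivalence → IsIso (γ.map F))
    {I I' : Cat.{v, u}} (F₀ F₁ : I ⟶ I')
    (h : Nonempty ((F₀.toFunctor : ↑I ⥤ ↑I') ≅ (F₁.toFunctor : ↑I ⥤ ↑I'))) :
    γ.map F₀ = γ.map F₁ := by
  obtain ⟨e⟩ := h
  let p : Cat.of (WalkingIso.{u} × I) ⟶ I := (CategoryTheory.Prod.snd _ _).toCatHom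
  let ι (a : WalkingIso.{u}) : I ⟶ Cat.of (WalkingIso.{u} × I) := (Prod.sectR a I).toCatHom
  let H : Cat.of (WalkingIso.{u} × I) ⟶ I' :=
    (Functor.uncurry.obj (WalkingIso.fromIso e)).toCatHom
  have : IsIso (γ.map p) := hγ p (Codiscrete.isEquivalence_prodSnd _ _)
  have hι : γ.map (ι .zero) = γ.map (ι .one) := by
    rw [← cancel_mono (γ.map p), ← γ.map_comp, ← γ.map_comp]
    rfl
  have hF₀ : ι .zero ≫ H = F₀ := Cat.Hom.ext (Prod.sectR_comp_uncurry_obj _ _)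
  have hF₁ : ι .one ≫ H = F₁ := Cat.Hom.ext (Prod.sectR_comp_uncurry_obj _ _)
  rw [← hF₀, ← hF₁, γ.map_comp, γ.map_comp, hι]
end

section
/- Let π : 𝒞 ⥤ I be a Grothendieck fibration and γ : 𝒞' ⥤ 𝒞 a functor. Then γ is a Grothendieck fibration if and only if all of the following hold: (i) π' = π ∘ γ : 𝒞' ⥤ I is a Grothendieck fibration; (ii) γ is cartesian over I, i.e. γ sends π'-cartesian morphisms to π-cartesian morphisms; (iii) for every object i of I the induced functor γ(i) : 𝒞'_i ⥤ 𝒞_i between the fibers over i is a Grothendieck fibration; (iv) for every morphism f : i ⟶ i' of I, choosing π-cartesian lifts of f to get a transition functor f* : 𝒞_{i'} ⥤ 𝒞_i and π'-cartesian lifts of f to get a transition functor f* : 𝒞'_{i'} ⥤ 𝒞'_i, and letting (f*)*𝒞'_i be the category of triples (c, c', α) with c in 𝒞_{i'}, c' in 𝒞'_i and α : f*(c) ≅ γ(i)(c') an isomorphism of 𝒞_i, regarded as fibered over 𝒞_{i'} by the first projection (a morphism of triples being cartesian over 𝒞_{i'} exactly when its 𝒞'_i-component is γ(i)-cartesian),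 the natural comparison functor 𝒞'_{i'} ⥤ (f*)*𝒞'_i — sending c' to (γ(i')(c'), f*(c'), the canonical isomorphism f*(γ(i')(c')) ≅ γ(i)(f*(c')) supplied by (ii)) — sends γ(i')-cartesian morphisms to morphisms whose 𝒞'_i-component is γ(i)-cartesian. -/
/-!
Write `π' = γ ⋙ π`. If `γ.map χ` is `π`-cartesian, then `χ` is `γ`-cartesian iff it is
`π'`-cartesian (passing from `γ` to `π'` needs `χ` strongly `γ`-cartesian, which holds when
`γ` is a fibration). So when `γ` is a fibration, lifting first along `π` and then along `γ`
produces `π'`-cartesian lifts, and (i)–(iv) follow.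

Conversely, every `γ`-cartesian morphism factors as a `π'`-vertical `γ`-cartesian morphism
followed by a `π'`-cartesian one. Hence a `γ`-cartesian lift is a lift in a fiber, by (iii),
followed by a `π'`-cartesian lift. For the composite `u₁ ≫ χ₁ ≫ u₂ ≫ χ₂` of two such
factorizations, the transition functor `f*` along `π'(χ₁)` rewrites `χ₁ ≫ u₂` as
`f*(u₂) ≫ χ'`. By (iv) and (iii), `u₁ ≫ f*(u₂)` is again vertical and `γ`-cartesian.
-/

open CategoryTheory

namespace Paper

universe w v u v₁ u₁ v₂ u₂ v₃ u₃

variable {C : Type u₁} [Category.{v₁} C] {D : Type u₂} [Category.{v₂} D]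
  {I : Type u₃} [Category.{v₃} I]

/-- A morphism `φ : a ⟶ b` is cartesian with respect to `π : C ⥤ I`. -/
def IsCartesian (π : C ⥤ I) {a b : C} (φ : a ⟶ b) : Prop :=
  ∀ (a' : C) (φ' : a' ⟶ b) (h : π.obj a' = π.obj a),
    π.map φ' = eqToHom h ≫ π.map φ →
      ∃! ψ : a' ⟶ a, π.map ψ = eqToHom h ∧ ψ ≫ φ = φ'

/-- `π : C ⥤ I` is a prefibration: every morphism of `I` with prescribed target
admits a cartesian lift. -/
def IsPrefibration (π : C ⥤ I) : Prop :=
  ∀ (b : C) (i : I) (f : i ⟶ π.obj b),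
    ∃ (a : C) (φ : a ⟶ b) (h : π.obj a = i),
      IsCartesian π φ ∧ π.map φ = eqToHom h ≫ f

/-- `π : C ⥤ I` is a (Grothendieck) fibration: a prefibration such that the
composite of two cartesian morphisms is cartesian. -/
def IsFibration (π : C ⥤ I) : Prop :=
  IsPrefibration π ∧
    ∀ ⦃a b c : C⦄ (φ : a ⟶ b) (ψ : b ⟶ c),
      IsCartesian π φ → IsCartesian π ψ → IsCartesian π (φ ≫ ψ)

/-- The fiber of `π : C ⥤ I` over `i : I`. -/
def Fiber (π : C ⥤ I) (i : I) : Type u₁ := {c : C // π.obj c = i}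

instance fiberCategory (π : C ⥤ I) (i : I) : Category.{v₁} (Fiber π i) where
  Hom a b := {φ : a.1 ⟶ b.1 // π.map φ = eqToHom (a.2.trans b.2.symm)}
  id a := ⟨𝟙 a.1, by simp⟩
  comp f g := ⟨f.1 ≫ g.1, by rw [Functor.map_comp, f.2, g.2, eqToHom_trans]⟩
  id_comp f := Subtype.ext (Category.id_comp f.1)
  comp_id f := Subtype.ext (Category.comp_id f.1)
  assoc f g h := Subtype.ext (Category.assoc f.1 g.1 h.1)

/-- The inclusion of a fiber into the total category. -/
def fiberInclusion (π : C ⥤ I) (i : I) : Fiber π i ⥤ C where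
  obj a := a.1
  map f := f.1

/-- Transition-functor data for a fibration: a functor between fibers together
with the cartesian lifts exhibiting it as a transition functor along `f`. -/
structure TransitionData (π : C ⥤ I) {i i' : I} (f : i ⟶ i')
    (F : Fiber π i' ⥤ Fiber π i) where
  lift : ∀ c : Fiber π i', (F.obj c).1 ⟶ c.1
  cart : ∀ c, IsCartesian π (lift c)
  over' : ∀ c, π.map (lift c) = eqToHom (F.obj c).2 ≫ f ≫ eqToHom c.2.symm
  nat : ∀ {c d : Fiber π i'} (u : c ⟶ d), (F.map u).1 ≫ lift d = lift c ≫ u.1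

end Paper

namespace Paper

variable {C : Type u₁} [Category.{v₁} C] {C' : Type u₂} [Category.{v₂} C']
  {I : Type u₃} [Category.{v₃} I]

/-- The functor induced by `γ : 𝒞' ⥤ 𝒞` between the fibers over `i` of
`π' = γ ⋙ π` and of `π`. -/
def fiberFunctor (γ : C' ⥤ C) (π : C ⥤ I) (i : I) :
    Fiber (γ ⋙ π) i ⥤ Fiber π i where
  obj a := ⟨γ.obj a.1, a.2⟩
  map f := ⟨γ.map f.1, f.2⟩
  map_id a := Subtype.ext (γ.map_id a.1)
  map_comp f g := Subtype.ext (γ.map_comp f.1 g.1)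

theorem Fiber.hom_eq_eqToHom_iff {π : C ⥤ I} {i : I} {a b : Fiber π i} (h : a = b)
    (f : a ⟶ b) : f = eqToHom h ↔ f.1 = eqToHom (congrArg Subtype.val h) := by
  subst h; exact Subtype.ext_iff

theorem Fiber.hom_eq_eqToHom_comp_iff {π : C ⥤ I} {i : I} {a a' b : Fiber π i} (h : a = a')
    (f : a ⟶ b) (g : a' ⟶ b) :
    f = eqToHom h ≫ g ↔ f.1 = eqToHom (congrArg Subtype.val h) ≫ g.1 := by
  subst h; simpa using Subtype.ext_iff

section Cartesian

variable (P : C ⥤ I)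

def IsStrongCartesian {a b : C} (φ : a ⟶ b) : Prop :=
  ∀ (z : C) (φ' : z ⟶ b) (g : P.obj z ⟶ P.obj a),
    g ≫ P.map φ = P.map φ' → ∃! ψ : z ⟶ a, P.map ψ = g ∧ ψ ≫ φ = φ'

variable {P}

theorem IsCartesian.hom_ext {a b z : C} {φ : a ⟶ b} (hφ : IsCartesian P φ)
    {h : P.obj z = P.obj a} {ψ₁ ψ₂ : z ⟶ a} (h₁ : P.map ψ₁ = eqToHom h)
    (h₂ : P.map ψ₂ = eqToHom h) (he : ψ₁ ≫ φ = ψ₂ ≫ φ) : ψ₁ = ψ₂ := by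
  obtain ⟨ψ, -, hψ⟩ := hφ z (ψ₂ ≫ φ) h (by rw [P.map_comp, h₂])
  exact (hψ ψ₁ ⟨h₁, he⟩).trans (hψ ψ₂ ⟨h₂, rfl⟩).symm

theorem IsCartesian.isIso_comp {a' a b : C} {e : a' ⟶ a} [IsIso e]
    {h : P.obj a' = P.obj a} (he : P.map e = eqToHom h) {φ : a ⟶ b}
    (hφ : IsCartesian P φ) : IsCartesian P (e ≫ φ) := by
  intro z φ' hz hφ'
  obtain ⟨ρ, ⟨hρ, rfl⟩, hρu⟩ := hφ z φ' (hz.trans h) (by simp [hφ', he])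
  have he' : P.map (inv e) = eqToHom h.symm := by simp [Functor.map_inv, he]
  refine ⟨ρ ≫ inv e, ⟨by simp [hρ, he'], by simp⟩, fun ψ ⟨hψ, hψφ⟩ => ?_⟩
  rw [← hρu (ψ ≫ e) ⟨by simp [hψ, he], by simpa using hψφ⟩]
  simp

theorem IsCartesian.exists_isIso_comp_eq {a a' b : C} {φ : a ⟶ b} {φ' : a' ⟶ b}
    (hφ : IsCartesian P φ) (hφ' : IsCartesian P φ') (h : P.obj a' = P.obj a)
    (hm : P.map φ' = eqToHom h ≫ P.map φ) :
    ∃ e : a' ⟶ a, IsIso e ∧ P.map e = eqToHom h ∧ e ≫ φ = φ' := by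
  obtain ⟨e, ⟨he, heφ⟩, -⟩ := hφ a' φ' h hm
  obtain ⟨e', ⟨he', he'φ'⟩, -⟩ := hφ' a φ h.symm (by simp [hm])
  refine ⟨e, ⟨e', ?_, ?_⟩, he, heφ⟩
  · exact hφ'.hom_ext (h := rfl) (by simp [he, he']) (by simp) (by simp [he'φ', heφ])
  · exact hφ.hom_ext (h := rfl) (by simp [he, he']) (by simp) (by simp [he'φ', heφ])

theorem IsCartesian.isStrongCartesian (hP : IsFibration P) {a b : C} {φ : a ⟶ b}
    (hφ : IsCartesian P φ) : IsStrongCartesian P φ := by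
  intro z φ' g hg
  -- factor through a cartesian lift `χ` of `g`; then `χ ≫ φ` is cartesian
  obtain ⟨x, χ, h, hχ, hχg⟩ := hP.1 a (P.obj z) g
  obtain ⟨u, ⟨hu, rfl⟩, huu⟩ := hP.2 χ φ hχ hφ z φ' h.symm (by simp [hχg, ← hg])
  refine ⟨u ≫ χ, ⟨by simp [hu, hχg], Category.assoc _ _ _⟩, fun ψ ⟨hψ, hψφ⟩ => ?_⟩
  obtain ⟨v, ⟨hv, rfl⟩, -⟩ := hχ z ψ h.symm (by simp [hψ, hχg])
  rw [huu v ⟨hv, by simpa using hψφ⟩]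

theorem exists_transitionData (hP : IsFibration P) {i i' : I} (f : i ⟶ i') :
    ∃ F : Fiber P i' ⥤ Fiber P i, Nonempty (TransitionData P f F) := by
  choose obj lift h cart over' using fun c : Fiber P i' => hP.1 c.1 i (f ≫ eqToHom c.2.symm)
  have key : ∀ {c d : Fiber P i'} (u : c ⟶ d),
      ∃! m : obj c ⟶ obj d, P.map m = eqToHom ((h c).trans (h d).symm) ∧
        m ≫ lift d = lift c ≫ u.1 := fun {c d} u =>
    (cart d).isStrongCartesian hP (obj c) (lift c ≫ u.1) _ (by simp [over', u.2])
  choose m hm hm_uniq using fun c d (u : c ⟶ d) => key u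
  refine ⟨{ obj := fun c => (⟨obj c, h c⟩ : Fiber P i)
            map := fun {c d} u => ⟨m c d u, (hm c d u).1⟩
            map_id := fun c => Subtype.ext (hm_uniq c c (𝟙 c) (𝟙 (obj c))
              ⟨(P.map_id _).trans (eqToHom_refl _ _).symm,
                (Category.id_comp _).trans (Category.comp_id _).symm⟩).symm
            map_comp := fun {c d e} u v => Subtype.ext
              (hm_uniq c e (u ≫ v) (m c d u ≫ m d e v) ⟨?_, ?_⟩).symm },
          ⟨{ lift := lift, cart := cart, over' := over', nat := fun {c d} u => (hm c d u).2 }⟩⟩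
  · rw [P.map_comp, (hm c d u).1, (hm d e v).1, eqToHom_trans]
  · rw [Category.assoc, (hm d e v).2, ← Category.assoc, (hm c d u).2, Category.assoc]
    rfl

end Cartesian

section Composite

variable {γ : C' ⥤ C} {π : C ⥤ I}

theorem IsStrongCartesian.isCartesian_comp_functor {a b : C'} {χ : a ⟶ b}
    (hχ : IsStrongCartesian γ χ) (hγχ : IsCartesian π (γ.map χ)) :
    IsCartesian (γ ⋙ π) χ := by
  intro z φ' h hφ'
  obtain ⟨ρ, ⟨hρ, hρχ⟩, hρu⟩ := hγχ (γ.obj z) (γ.map φ') h hφ'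
  obtain ⟨ψ, ⟨hψ, rfl⟩, hψu⟩ := hχ z φ' ρ hρχ
  refine ⟨ψ, ⟨by simp [hψ, hρ], rfl⟩, fun ψ' ⟨hψ', hψ'χ⟩ => hψu ψ' ⟨?_, hψ'χ⟩⟩
  exact hρu _ ⟨hψ', by rw [← γ.map_comp, hψ'χ]⟩

theorem IsCartesian.of_comp_functor {a b : C'} {χ : a ⟶ b}
    (hχ : IsCartesian (γ ⋙ π) χ) (hγχ : IsCartesian π (γ.map χ)) : IsCartesian γ χ := by
  intro z φ' h hφ'
  have hz : (γ ⋙ π).obj z = (γ ⋙ π).obj a := congrArg π.obj h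
  obtain ⟨ψ, ⟨hψ, rfl⟩, hψu⟩ := hχ z φ' hz (by simp [hφ', eqToHom_map])
  have hγψ : γ.map ψ = eqToHom h :=
    hγχ.hom_ext (h := hz) hψ (eqToHom_map _ _) (by rw [← γ.map_comp, hφ'])
  exact ⟨ψ, ⟨hγψ, rfl⟩, fun ψ' ⟨hψ', hψ'χ⟩ => hψu ψ' ⟨by simp [hψ', eqToHom_map], hψ'χ⟩⟩

theorem IsCartesian.of_comp_of_isVertical {a d b : C'} {u : a ⟶ d} {χ : d ⟶ b}
    (hχ : IsCartesian (γ ⋙ π) χ) {h : (γ ⋙ π).obj a = (γ ⋙ π).obj d}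
    (hu : (γ ⋙ π).map u = eqToHom h) (huχ : IsCartesian γ (u ≫ χ)) : IsCartesian γ u := by
  have hu' : π.map (γ.map u) = eqToHom h := hu
  intro z φ' hz hφ'
  obtain ⟨ρ, ⟨hρ, hρχ⟩, hρu⟩ := huχ z (φ' ≫ χ) hz (by simp [hφ'])
  refine ⟨ρ, ⟨hρ, ?_⟩, fun ρ' ⟨hρ', hρ'u⟩ => hρu ρ' ⟨hρ', by rw [← hρ'u, Category.assoc]⟩⟩
  exact hχ.hom_ext (h := (congrArg π.obj hz).trans h) (by simp [hρ, hu', eqToHom_map])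
    (by simp [hφ', hu', eqToHom_map]) (by simpa using hρχ)

theorem IsCartesian.comp_of_isVertical {a d b : C'} {u : a ⟶ d} {χ : d ⟶ b}
    {h : (γ ⋙ π).obj a = (γ ⋙ π).obj d} (hu : (γ ⋙ π).map u = eqToHom h)
    (huγ : IsCartesian γ u) (hχ : IsCartesian (γ ⋙ π) χ) (hγχ : IsCartesian π (γ.map χ)) :
    IsCartesian γ (u ≫ χ) := by
  have hu' : π.map (γ.map u) = eqToHom h := hu
  intro z φ' hz hφ'
  have hz' : (γ ⋙ π).obj z = (γ ⋙ π).obj d := (congrArg π.obj hz).trans h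
  obtain ⟨w, ⟨hw, rfl⟩, hwu⟩ := hχ z φ' hz' (by simp [hφ', hu', eqToHom_map])
  have hγw : γ.map w = eqToHom hz ≫ γ.map u :=
    hγχ.hom_ext (h := hz') hw (by simp [hu', eqToHom_map]) (by simpa using hφ')
  obtain ⟨ψ, ⟨hψ, rfl⟩, hψu⟩ := huγ z w hz hγw
  refine ⟨ψ, ⟨hψ, (Category.assoc _ _ _).symm⟩, fun ψ' ⟨hψ', hψ'uχ⟩ => hψu ψ' ⟨hψ', ?_⟩⟩
  exact hwu _ ⟨by simp [hψ', hu', eqToHom_map], by simpa using hψ'uχ⟩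

theorem IsCartesian.exists_isVertical_factor {a b d : C'} {φ : a ⟶ b} {χ : d ⟶ b}
    (hχ : IsCartesian (γ ⋙ π) χ) (hφ : IsCartesian γ φ) (h : (γ ⋙ π).obj a = (γ ⋙ π).obj d)
    (hφχ : (γ ⋙ π).map φ = eqToHom h ≫ (γ ⋙ π).map χ) :
    ∃ u : a ⟶ d, (γ ⋙ π).map u = eqToHom h ∧ u ≫ χ = φ ∧ IsCartesian γ u := by
  obtain ⟨u, ⟨hu, rfl⟩, -⟩ := hχ a φ h hφχ
  exact ⟨u, hu, rfl, hχ.of_comp_of_isVertical hu hφ⟩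

theorem isCartesian_fiberFunctor_iff {i : I} {a b : Fiber (γ ⋙ π) i} (u : a ⟶ b) :
    IsCartesian (fiberFunctor γ π i) u ↔ IsCartesian γ u.1 := by
  constructor
  · intro hu z φ' hz hφ'
    let zF : Fiber (γ ⋙ π) i := ⟨z, (congrArg π.obj hz).trans a.2⟩
    have hu' : π.map (γ.map u.1) = eqToHom (a.2.trans b.2.symm) := u.2
    obtain ⟨ψ, ⟨hψ, hψu⟩, huniq⟩ := hu zF ⟨φ', by simp [hφ', hu', eqToHom_map]⟩ (Subtype.ext hz)
      ((Fiber.hom_eq_eqToHom_comp_iff _ _ _).2 hφ')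
    refine ⟨ψ.1, ⟨(Fiber.hom_eq_eqToHom_iff _ _).1 hψ, congrArg Subtype.val hψu⟩,
      fun ψ' ⟨hψ', hψ'u⟩ => ?_⟩
    exact congrArg Subtype.val (huniq ⟨ψ', by simp [hψ', eqToHom_map]⟩
      ⟨(Fiber.hom_eq_eqToHom_iff _ _).2 hψ', Subtype.ext hψ'u⟩)
  · intro hu zF φF hF hφF
    have hz : γ.obj zF.1 = γ.obj a.1 := congrArg Subtype.val hF
    obtain ⟨ψ, ⟨hψ, hψu⟩, huniq⟩ :=
      hu zF.1 φF.1 hz ((Fiber.hom_eq_eqToHom_comp_iff _ _ _).1 hφF)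
    refine ⟨⟨ψ, by simp [hψ, eqToHom_map]⟩, ⟨(Fiber.hom_eq_eqToHom_iff _ _).2 hψ,
      Subtype.ext hψu⟩, fun ψF' ⟨hψ', hψ'u⟩ => Subtype.ext (huniq _
        ⟨(Fiber.hom_eq_eqToHom_iff _ _).1 hψ', congrArg Subtype.val hψ'u⟩)⟩

theorem exists_lift_isCartesian_of_isFibration (hπ : IsFibration π) (hγ : IsFibration γ)
    (b : C') {i : I} (f : i ⟶ (γ ⋙ π).obj b) :
    ∃ (a : C') (χ : a ⟶ b) (h : (γ ⋙ π).obj a = i),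
      IsCartesian γ χ ∧ IsCartesian π (γ.map χ) ∧ (γ ⋙ π).map χ = eqToHom h ≫ f := by
  obtain ⟨x, φ, hx, hφ, hφf⟩ := hπ.1 (γ.obj b) i f
  obtain ⟨a, χ, ha, hχ, hχφ⟩ := hγ.1 b x φ
  refine ⟨a, χ, (congrArg π.obj ha).trans hx, hχ, ?_, by simp [hχφ, hφf, eqToHom_map]⟩
  rw [hχφ]
  exact hφ.isIso_comp (eqToHom_map π ha)

theorem isCartesian_map_of_isFibration (hπ : IsFibration π) (hγ : IsFibration γ)
    {a b : C'} {φ : a ⟶ b} (hφ : IsCartesian (γ ⋙ π) φ) : IsCartesian π (γ.map φ) := by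
  obtain ⟨y, χ, h, hχ, hγχ, hχφ⟩ :=
    exists_lift_isCartesian_of_isFibration hπ hγ b ((γ ⋙ π).map φ)
  obtain ⟨e, he, heχ, rfl⟩ :=
    ((hχ.isStrongCartesian hγ).isCartesian_comp_functor hγχ).exists_isIso_comp_eq hφ h.symm
      (by rw [hχφ]; simp)
  rw [γ.map_comp]
  exact hγχ.isIso_comp (P := π) heχ

theorem isFibration_comp (hπ : IsFibration π) (hγ : IsFibration γ) :
    IsFibration (γ ⋙ π) := by
  refine ⟨fun b i f => ?_, fun a b c φ ψ hφ hψ => ?_⟩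
  · obtain ⟨a, χ, h, hχ, hγχ, hχf⟩ := exists_lift_isCartesian_of_isFibration hπ hγ b f
    exact ⟨a, χ, h, (hχ.isStrongCartesian hγ).isCartesian_comp_functor hγχ, hχf⟩
  · have hγφ := isCartesian_map_of_isFibration hπ hγ hφ
    have hγψ := isCartesian_map_of_isFibration hπ hγ hψ
    have hφψ := hγ.2 φ ψ (hφ.of_comp_functor hγφ) (hψ.of_comp_functor hγψ)
    refine (hφψ.isStrongCartesian hγ).isCartesian_comp_functor ?_
    rw [γ.map_comp]
    exact hπ.2 _ _ hγφ hγψ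

theorem isFibration_fiberFunctor (hγ : IsFibration γ) (i : I) :
    IsFibration (fiberFunctor γ π i) := by
  refine ⟨fun b x g => ?_, fun a b c φ ψ hφ hψ => ?_⟩
  · obtain ⟨g, hg⟩ := g
    obtain ⟨a, χ, h, hχ, hχg⟩ := hγ.1 b.1 x.1 g
    have hχv : π.map (γ.map χ) = eqToHom (((congrArg π.obj h).trans x.2).trans b.2.symm) := by
      rw [hχg]
      exact (π.map_comp _ _).trans
        ((congrArg₂ (· ≫ ·) (eqToHom_map π h) hg).trans (eqToHom_trans _ _))
    exact ⟨⟨a, (congrArg π.obj h).trans x.2⟩, ⟨χ, hχv⟩, Subtype.ext h,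
      (isCartesian_fiberFunctor_iff _).2 hχ, (Fiber.hom_eq_eqToHom_comp_iff _ _ _).2 hχg⟩
  · rw [isCartesian_fiberFunctor_iff] at hφ hψ ⊢
    exact hγ.2 _ _ hφ hψ

theorem isCartesian_map_of_transitionData (hπ : IsFibration π) (hγ : IsFibration γ)
    {i i' : I} {f : i ⟶ i'} {F : Fiber (γ ⋙ π) i' ⥤ Fiber (γ ⋙ π) i}
    (T : TransitionData (γ ⋙ π) f F) {a b : Fiber (γ ⋙ π) i'} (u : a ⟶ b)
    (hu : IsCartesian (fiberFunctor γ π i') u) : IsCartesian (fiberFunctor γ π i) (F.map u) := by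
  rw [isCartesian_fiberFunctor_iff] at hu ⊢
  have hliftu : IsCartesian γ ((F.map u).1 ≫ T.lift b) := by
    rw [T.nat u]
    exact hγ.2 _ _
      ((T.cart a).of_comp_functor (isCartesian_map_of_isFibration hπ hγ (T.cart a))) hu
  exact (T.cart b).of_comp_of_isVertical (F.map u).2 hliftu

theorem isPrefibration_of_isPrefibration_fiberFunctor (hπ' : IsPrefibration (γ ⋙ π))
    (hmap : ∀ {a b : C'} (φ : a ⟶ b), IsCartesian (γ ⋙ π) φ → IsCartesian π (γ.map φ))
    (hfiber : ∀ i : I, IsPrefibration (fiberFunctor γ π i)) : IsPrefibration γ := by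
  intro b x g
  obtain ⟨c, χ, hc, hχ, hχg⟩ := hπ' b (π.obj x) (π.map g)
  obtain ⟨v, ⟨hv, rfl⟩, -⟩ := hmap χ hχ x g hc.symm
    (by rw [← Functor.comp_map, hχg]; simp)
  obtain ⟨a, u, ha, hu, huv⟩ := hfiber (π.obj x) ⟨c, hc⟩ ⟨x, rfl⟩ ⟨v, hv⟩
  refine ⟨a.1, u.1 ≫ χ, congrArg Subtype.val ha, ?_, ?_⟩
  · exact ((isCartesian_fiberFunctor_iff u).1 hu).comp_of_isVertical u.2 hχ (hmap χ hχ)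
  · have hγu : γ.map u.1 = eqToHom (congrArg Subtype.val ha) ≫ v :=
      (Fiber.hom_eq_eqToHom_comp_iff _ _ _).1 huv
    rw [γ.map_comp, hγu]
    exact Category.assoc _ _ _

theorem isCartesian_comp_of_transitionData (hπ' : IsFibration (γ ⋙ π))
    (hmap : ∀ {a b : C'} (φ : a ⟶ b), IsCartesian (γ ⋙ π) φ → IsCartesian π (γ.map φ))
    (hfiber : ∀ i : I, IsFibration (fiberFunctor γ π i))
    (htransition : ∀ {i i' : I} (f : i ⟶ i') (F : Fiber (γ ⋙ π) i' ⥤ Fiber (γ ⋙ π) i)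
      (_ : TransitionData (γ ⋙ π) f F) {a b : Fiber (γ ⋙ π) i'} (u : a ⟶ b),
      IsCartesian (fiberFunctor γ π i') u → IsCartesian (fiberFunctor γ π i) (F.map u))
    {a b c : C'} {φ : a ⟶ b} {ψ : b ⟶ c} (hφ : IsCartesian γ φ) (hψ : IsCartesian γ ψ) :
    IsCartesian γ (φ ≫ ψ) := by
  obtain ⟨F, ⟨T⟩⟩ := exists_transitionData hπ' ((γ ⋙ π).map φ)
  let bF : Fiber (γ ⋙ π) ((γ ⋙ π).obj b) := ⟨b, rfl⟩
  have hlift : π.map (γ.map (T.lift bF)) = _ := T.over' bF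
  obtain ⟨u, hu, huφ, huγ⟩ :=
    (T.cart bF).exists_isVertical_factor hφ (F.obj bF).2.symm (by simp [hlift])
  obtain ⟨d, χ, hd, hχ, hχψ⟩ := hπ'.1 c _ ((γ ⋙ π).map ψ)
  simp only [Functor.comp_map] at hχψ
  obtain ⟨v, hv, rfl, hvγ⟩ := hχ.exists_isVertical_factor hψ hd.symm (by simp [hχψ])
  let dF : Fiber (γ ⋙ π) ((γ ⋙ π).obj b) := ⟨d, hd⟩
  let vF : bF ⟶ dF := ⟨v, hv⟩
  let aF : Fiber (γ ⋙ π) ((γ ⋙ π).obj a) := ⟨a, rfl⟩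
  let uF : aF ⟶ F.obj bF := ⟨u, hu⟩
  have hφψ : (u ≫ T.lift bF) ≫ v ≫ χ = (u ≫ (F.map vF).1) ≫ T.lift dF ≫ χ :=
    calc (u ≫ T.lift bF) ≫ v ≫ χ = u ≫ (T.lift bF ≫ v) ≫ χ := by simp only [Category.assoc]
      _ = u ≫ ((F.map vF).1 ≫ T.lift dF) ≫ χ := congrArg (fun m => u ≫ m ≫ χ) (T.nat vF).symm
      _ = (u ≫ (F.map vF).1) ≫ T.lift dF ≫ χ := by simp only [Category.assoc]
  have huv : IsCartesian γ (uF ≫ F.map vF).1 :=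
    (isCartesian_fiberFunctor_iff _).1 ((hfiber _).2 _ _ ((isCartesian_fiberFunctor_iff uF).2 huγ)
      (htransition _ F T vF ((isCartesian_fiberFunctor_iff vF).2 hvγ)))
  have hlχ : IsCartesian (γ ⋙ π) (T.lift dF ≫ χ) := hπ'.2 _ _ (T.cart dF) hχ
  rw [← huφ, hφψ]
  exact huv.comp_of_isVertical (uF ≫ F.map vF).2 hlχ (hmap _ hlχ)

end Composite

/-- Let `π : 𝒞 ⥤ I` be a Grothendieck fibration and
`γ : 𝒞' ⥤ 𝒞` a functor. Then `γ` is a Grothendieck fibration if and only if: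
(i) `π' = γ ⋙ π` is a Grothendieck fibration; (ii) `γ` sends `π'`-cartesian
morphisms to `π`-cartesian morphisms; (iii) for every `i` the induced functor
`γ(i) : 𝒞'_i ⥤ 𝒞_i` between fibers is a Grothendieck fibration; and (iv) for
every `f : i ⟶ i'` and every transition functor `f* : 𝒞'_{i'} ⥤ 𝒞'_i` of `π'`
obtained from `π'`-cartesian lifts of `f` (this is the `𝒞'_i`-component of the
comparison functor `𝒞'_{i'} ⥤ (f*)*𝒞'_i`), `f*` sends `γ(i')`-cartesian
morphisms to `γ(i)`-cartesian morphisms. -/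
theorem stmt2 (π : C ⥤ I) (hπ : IsFibration π) (γ : C' ⥤ C) :
    IsFibration γ ↔
      (IsFibration (γ ⋙ π) ∧
        (∀ {a b : C'} (φ : a ⟶ b),
          IsCartesian (γ ⋙ π) φ → IsCartesian π (γ.map φ)) ∧
        (∀ i : I, IsFibration (fiberFunctor γ π i)) ∧
        (∀ {i i' : I} (f : i ⟶ i')
          (F : Fiber (γ ⋙ π) i' ⥤ Fiber (γ ⋙ π) i)
          (_ : TransitionData (γ ⋙ π) f F)
          {a b : Fiber (γ ⋙ π) i'} (u : a ⟶ b),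
          IsCartesian (fiberFunctor γ π i') u →
            IsCartesian (fiberFunctor γ π i) (F.map u))) := by
  constructor
  · intro hγ
    exact ⟨isFibration_comp hπ hγ, fun _ => isCartesian_map_of_isFibration hπ hγ,
      isFibration_fiberFunctor hγ, fun _ _ T => isCartesian_map_of_transitionData hπ hγ T⟩
  · rintro ⟨hπ', hmap, hfiber, htransition⟩
    exact ⟨isPrefibration_of_isPrefibration_fiberFunctor hπ'.1 hmap fun i => (hfiber i).1,
      fun _ _ _ _ _ => isCartesian_comp_of_transitionData hπ' hmap hfiber htransition⟩

end Paper
end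

section
/- Let π : 𝒞 ⥤ I be a functor. For an object i of I, let i\𝒞 denote the right comma-fiber: the category of pairs (c, α) with c an object of 𝒞 and α : i ⟶ π(c) a morphism of I, morphisms (c, α) ⟶ (c', α') being morphisms g : c ⟶ c' in 𝒞 with π(g) ∘ α = α'; regard the fiber 𝒞_i as the full subcategory of i\𝒞 of pairs with α = id_i. Then π is a prefibration if and only if for every object i of I the inclusion 𝒞_i ⥤ i\𝒞 admits a right adjoint. -/
/-!
A cartesian lift of `f : i ⟶ π(c)` is the same thing as a terminal object of the comma
category `fiberToComma π i ↓ (c, f)`: a morphism `s ⟶ T` there is a morphism in the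
fiber over `i` through which `s` factors, and the uniqueness of such factorizations is
exactly cartesianness of `T`. The theorem then follows from the characterization of left
adjoints by terminal objects of the costructured-arrow categories.
-/

open CategoryTheory

namespace Paper

variable {C : Type u₁} [Category.{v₁} C] {I : Type u₃} [Category.{v₃} I]

/-- The inclusion of the fiber `𝒞_i` into the right comma-fiber `i \ 𝒞`
(the category of structured arrows `i ⟶ π(c)`). -/
def fiberToComma (π : C ⥤ I) (i : I) : Fiber π i ⥤ StructuredArrow i π where
  obj a := StructuredArrow.mk (Y := a.1) (eqToHom a.2.symm)
  map {a b} φ := StructuredArrow.homMk φ.1 (by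
    dsimp
    rw [φ.2, eqToHom_trans])
  map_id a := by
    apply StructuredArrow.hom_ext
    rfl
  map_comp f g := by
    apply StructuredArrow.hom_ext
    rfl

open Limits

namespace FiberToComma

variable {π : C ⥤ I} {i : I} {B : StructuredArrow i π}

def arrow (s : CostructuredArrow (fiberToComma π i) B) : s.left.1 ⟶ B.right := s.hom.right

theorem map_arrow (s : CostructuredArrow (fiberToComma π i) B) :
    π.map (arrow s) = eqToHom s.left.2 ≫ B.hom :=
  (eqToHom_comp_iff s.left.2.symm _ _).mp (StructuredArrow.w s.hom)

variable (B) in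
def costructuredArrowMk {a : C} (h : π.obj a = i) (φ : a ⟶ B.right)
    (hφ : π.map φ = eqToHom h ≫ B.hom) : CostructuredArrow (fiberToComma π i) B :=
  CostructuredArrow.mk (Y := show Fiber π i from ⟨a, h⟩) (StructuredArrow.homMk φ (by
    change eqToHom h.symm ≫ π.map φ = B.hom
    rw [hφ, eqToHom_trans_assoc, eqToHom_refl, Category.id_comp]))

def homMkOfFactor {s T : CostructuredArrow (fiberToComma π i) B}
    (ψ : s.left.1 ⟶ T.left.1) (hψ : π.map ψ = eqToHom (s.left.2.trans T.left.2.symm))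
    (hfac : ψ ≫ arrow T = arrow s) : s ⟶ T :=
  CostructuredArrow.homMk ⟨ψ, hψ⟩ (StructuredArrow.ext _ _ hfac)

theorem hom_left_comp_arrow {s T : CostructuredArrow (fiberToComma π i) B} (m : s ⟶ T) :
    m.left.1 ≫ arrow T = arrow s :=
  congrArg CommaMorphism.right (CostructuredArrow.w m)

noncomputable def isTerminalOfIsCartesian (T : CostructuredArrow (fiberToComma π i) B)
    (hT : IsCartesian π (arrow T)) : IsTerminal T := by
  have factor (s : CostructuredArrow (fiberToComma π i) B) :
      ∃! ψ : s.left.1 ⟶ T.left.1, π.map ψ = eqToHom (s.left.2.trans T.left.2.symm) ∧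
        ψ ≫ arrow T = arrow s :=
    hT _ _ _ (by rw [map_arrow, map_arrow, eqToHom_trans_assoc])
  choose ψ hψ huniq using factor
  refine IsTerminal.ofUniqueHom (fun s => homMkOfFactor (ψ s) (hψ s).1 (hψ s).2)
    fun s m => CostructuredArrow.ext _ _ (Subtype.ext ?_)
  exact huniq s m.left.1 ⟨m.left.2, hom_left_comp_arrow m⟩

theorem isCartesian_of_isTerminal {T : CostructuredArrow (fiberToComma π i) B}
    (hT : IsTerminal T) : IsCartesian π (arrow T) := by
  intro a' φ' h hφ'
  let s := costructuredArrowMk B (h.trans T.left.2) φ'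
    (by rw [hφ', map_arrow, eqToHom_trans_assoc])
  refine ⟨(hT.from s).left.1, ⟨(hT.from s).left.2, hom_left_comp_arrow (hT.from s)⟩, ?_⟩
  rintro ψ ⟨hψ, hfac⟩
  exact congrArg (fun m : s ⟶ T => m.left.1) (hT.hom_ext (homMkOfFactor ψ hψ hfac) _)

end FiberToComma

open FiberToComma in
/-- A functor `π : 𝒞 ⥤ I` is a prefibration if and only if for
every object `i` of `I` the inclusion of the fiber `𝒞_i` into the right
comma-fiber `i \ 𝒞` admits a right adjoint. -/
theorem stmt3 (π : C ⥤ I) :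
    IsPrefibration π ↔ ∀ i : I, (fiberToComma π i).IsLeftAdjoint := by
  simp only [isLeftAdjoint_iff_hasTerminal_costructuredArrow]
  constructor
  · intro hpre i B
    obtain ⟨a, φ, h, hcart, hφ⟩ := hpre B.right i B.hom
    exact (isTerminalOfIsCartesian (costructuredArrowMk B h φ hφ) hcart).hasTerminal
  · intro hadj b i f
    have := hadj i (StructuredArrow.mk f)
    let T := ⊤_ CostructuredArrow (fiberToComma π i) (StructuredArrow.mk f)
    exact ⟨T.left.1, arrow T, T.left.2, isCartesian_of_isTerminal terminalIsTerminal,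
      map_arrow T⟩

end Paper
end

section
/- Let ⟨L, R⟩ be a factorization system on a category I: L and R are classes of morphisms each containing all identities and closed under composition, L ∩ R equals the class of isomorphisms, and every morphism f : i ⟶ i' factors as f = r ∘ l with l ∈ L and r ∈ R, uniquely up to unique isomorphism (for any two such factorizations there is a unique isomorphism between the middle objects making both triangles commute). Let Arrowᴸ(I) ⊆ Arrow(I) be the full subcategory of the arrow category spanned by arrows in L. Then the source functor s : Arrowᴸ(I) ⥤ I is a Grothendieck fibration, and a morphism (g, g') of Arrowᴸ(I) is s-cartesian if and only if g' ∈ R. Dually, the target functor t : Arrowᴿ(I) ⥤ I on the full subcategory of arrows in R is a Grothendieck opfibration, and a morphism (g, g') is t-cocartesian if and only if g ∈ L. -/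
open CategoryTheory

namespace Paper

/-- A factorization system `⟨L, R⟩` on a category `I`: both classes contain the
identities and are closed under composition, `L ∩ R` is exactly the class of
isomorphisms, and every morphism factors as a morphism of `L` followed by a
morphism of `R`, uniquely up to unique isomorphism. -/
structure FactorizationSystem (I : Type u₃) [Category.{v₃} I]
    (L R : MorphismProperty I) : Prop where
  id_mem_left : ∀ X : I, L (𝟙 X)
  comp_mem_left : ∀ {X Y Z : I} (f : X ⟶ Y) (g : Y ⟶ Z), L f → L g → L (f ≫ g)
  id_mem_right : ∀ X : I, R (𝟙 X)
  comp_mem_right : ∀ {X Y Z : I} (f : X ⟶ Y) (g : Y ⟶ Z), R f → R g → R (f ≫ g)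
  inter_iso : ∀ {X Y : I} (f : X ⟶ Y), (L f ∧ R f) ↔ IsIso f
  fac : ∀ {X Y : I} (f : X ⟶ Y),
    ∃ (M : I) (l : X ⟶ M) (r : M ⟶ Y), L l ∧ R r ∧ l ≫ r = f
  uniq : ∀ {X Y : I} (f : X ⟶ Y) (M M' : I) (l : X ⟶ M) (r : M ⟶ Y)
    (l' : X ⟶ M') (r' : M' ⟶ Y), L l → R r → L l' → R r' →
    l ≫ r = f → l' ≫ r' = f →
    ∃! e : M ≅ M', l ≫ e.hom = l' ∧ e.hom ≫ r' = r

end Paper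

/-!
Everything rests on the unique diagonal fillers of `L` against `R` that a factorization system
provides. If `φ : X ⟶ Y` in `Arrowᴸ(I)` has `φ.right ∈ R`, a competitor of `φ` over the same
source map determines a commutative square from an `L`-arrow to `φ.right`, whose unique filler
is the unique factorization through `φ`. Conversely, factoring `φ.right = l ≫ r` writes `φ` as
a morphism over the identity followed by a cartesian one; for cartesian `φ` that first morphism,
and with it `l`, is an isomorphism, so `φ.right = l ≫ r ∈ R`. Cartesian lifts of `f` into `X` come
from factoring `f ≫ X.hom`. The target functor on `Arrowᴿ(I)` is handled by the dual argument,
phrased with cocartesian morphisms, which are the cartesian morphisms of `tᵒᵖ`.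
-/

namespace Paper

open Opposite

section Cartesian

variable {C : Type*} [Category C] {I : Type*} [Category I] {π : C ⥤ I}

def IsCocartesian (π : C ⥤ I) {a b : C} (φ : a ⟶ b) : Prop :=
  ∀ (b' : C) (φ' : a ⟶ b') (h : π.obj b = π.obj b'),
    π.map φ' = π.map φ ≫ eqToHom h →
      ∃! ψ : b ⟶ b', π.map ψ = eqToHom h ∧ φ ≫ ψ = φ'

theorem isCartesian_op_iff {a b : Cᵒᵖ} (φ : a ⟶ b) :
    IsCartesian π.op φ ↔ IsCocartesian π φ.unop := by
  constructor
  · intro hφ b' φ' h hφ'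
    obtain ⟨ψ, ⟨hψ, hψφ⟩, huniq⟩ := hφ (op b') φ'.op (congrArg op h.symm)
      (Quiver.Hom.unop_inj (by simp [hφ']))
    refine ⟨ψ.unop, ⟨by simpa using congrArg Quiver.Hom.unop hψ, congrArg Quiver.Hom.unop hψφ⟩,
      fun ψ' ⟨hψ', hψ'φ⟩ => congrArg Quiver.Hom.unop (huniq ψ'.op ⟨?_, ?_⟩)⟩
    exacts [Quiver.Hom.unop_inj (by simp [hψ']), Quiver.Hom.unop_inj hψ'φ]
  · intro hφ a' φ' h hφ'
    obtain ⟨ψ, ⟨hψ, hψφ⟩, huniq⟩ := hφ a'.unop φ'.unop (congrArg unop h.symm)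
      (by simpa using congrArg Quiver.Hom.unop hφ')
    refine ⟨ψ.op, ⟨Quiver.Hom.unop_inj (by simp [hψ]), Quiver.Hom.unop_inj hψφ⟩,
      fun ψ' ⟨hψ', hψ'φ⟩ => Quiver.Hom.unop_inj (huniq ψ'.unop ⟨?_, congrArg Quiver.Hom.unop hψ'φ⟩)⟩
    simpa using congrArg Quiver.Hom.unop hψ'

lemma IsCartesian.isIso_of_comp_eq {a a' b : C} {φ : a ⟶ b} {φ' : a' ⟶ b} {χ : a ⟶ a'}
    (hφ : IsCartesian π φ) (hφ' : IsCartesian π φ') (h : π.obj a = π.obj a')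
    (hχ : π.map χ = eqToHom h) (hcomp : χ ≫ φ' = φ) : IsIso χ := by
  obtain ⟨ψ, ⟨hψ, hψφ⟩, -⟩ := hφ a' φ' h.symm (by simp [← hcomp, hχ])
  have hχψ : χ ≫ ψ = 𝟙 a := (hφ a φ rfl (by simp)).unique
    ⟨by simp [hχ, hψ], by simp [hψφ, hcomp]⟩ ⟨by simp, by simp⟩
  have hψχ : ψ ≫ χ = 𝟙 a' := (hφ' a' φ' rfl (by simp)).unique
    ⟨by simp [hχ, hψ], by simp [hcomp, hψφ]⟩ ⟨by simp, by simp⟩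
  exact ⟨ψ, hχψ, hψχ⟩

lemma IsCocartesian.isIso_of_comp_eq {a b b' : C} {φ : a ⟶ b} {φ' : a ⟶ b'} {χ : b' ⟶ b}
    (hφ : IsCocartesian π φ) (hφ' : IsCocartesian π φ') (h : π.obj b' = π.obj b)
    (hχ : π.map χ = eqToHom h) (hcomp : φ' ≫ χ = φ) : IsIso χ := by
  have : IsIso χ.op := ((isCartesian_op_iff φ.op).2 hφ).isIso_of_comp_eq
    ((isCartesian_op_iff φ'.op).2 hφ') (congrArg op h.symm)
    (by simp [hχ, eqToHom_op]) (by rw [← op_comp, hcomp])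
  exact isIso_of_op χ

end Cartesian

section ArrowCategory

variable {I : Type*} [Category I] {L R : MorphismProperty I}

abbrev Arrows (L : MorphismProperty I) : Type _ :=
  ObjectProperty.FullSubcategory (fun f : Arrow I => L f.hom)

abbrev arrowSource (L : MorphismProperty I) : Arrows L ⥤ I :=
  ObjectProperty.ι _ ⋙ Arrow.leftFunc

abbrev arrowTarget (R : MorphismProperty I) : Arrows R ⥤ I :=
  ObjectProperty.ι _ ⋙ Arrow.rightFunc

namespace FactorizationSystem

variable (hLR : FactorizationSystem I L R)
include hLR

lemma mem_left_of_isIso {X Y : I} (f : X ⟶ Y) [IsIso f] : L f :=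
  ((hLR.inter_iso f).2 inferInstance).1

lemma mem_right_of_isIso {X Y : I} (f : X ⟶ Y) [IsIso f] : R f :=
  ((hLR.inter_iso f).2 inferInstance).2

lemma existsUnique_lift {A B C D : I} {l : A ⟶ B} {r : C ⟶ D} (u : A ⟶ C) (v : B ⟶ D)
    (hl : L l) (hr : R r) (sq : u ≫ r = l ≫ v) :
    ∃! d : B ⟶ C, l ≫ d = u ∧ d ≫ r = v := by
  obtain ⟨M, lu, ru, hlu, hru, hu⟩ := hLR.fac u
  obtain ⟨N, lv, rv, hlv, hrv, hv⟩ := hLR.fac v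
  -- `(lu, ru ≫ r)` and `(l ≫ lv, rv)` both factor the diagonal `u ≫ r = l ≫ v` of the square
  obtain ⟨θ, ⟨hθl, hθr⟩, hθ_uniq⟩ := hLR.uniq (u ≫ r) M N lu (ru ≫ r) (l ≫ lv) rv
    hlu (hLR.comp_mem_right _ _ hru hr) (hLR.comp_mem_left _ _ hl hlv) hrv
    (by rw [← hu, Category.assoc]) (by rw [Category.assoc, hv, sq])
  refine ⟨lv ≫ θ.inv ≫ ru, ⟨?_, ?_⟩, fun d ⟨hd, hdr⟩ => ?_⟩
  · rw [← hu, ← Category.assoc, ← hθl]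
    simp
  · rw [← hv, Category.assoc, Category.assoc, ← hθr]
    simp
  -- a filler `d = ld ≫ rd` compares `(lu, ru)` with `(l ≫ ld, rd)` and `(ld, rd ≫ r)` with
  -- `(lv, rv)`, and the two comparison isomorphisms compose to `θ`
  obtain ⟨P, ld, rd, hld, hrd, hd'⟩ := hLR.fac d
  obtain ⟨α, ⟨hαl, hαr⟩, -⟩ := hLR.uniq u M P lu ru (l ≫ ld) rd hlu hru
    (hLR.comp_mem_left _ _ hl hld) hrd hu (by rw [Category.assoc, hd', hd])
  obtain ⟨β, ⟨hβl, hβr⟩, -⟩ := hLR.uniq v P N ld (rd ≫ r) lv rv hld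
    (hLR.comp_mem_right _ _ hrd hr) hlv hrv (by rw [← Category.assoc, hd', hdr]) hv
  have hαβ : α ≪≫ β = θ := hθ_uniq (α ≪≫ β)
    ⟨by simp [reassoc_of% hαl, hβl], by simp [hβr, reassoc_of% hαr]⟩
  rw [← hd', ← hαβ, Iso.trans_inv, ← hβl, ← hαr]
  simp

lemma isCartesian_arrowSource_of_mem_right {X Y : Arrows L}
    (φ : X ⟶ Y) (hφ : R φ.hom.right) : IsCartesian (arrowSource L) φ := by
  intro X' φ' (h : X'.obj.left = X.obj.left) (hφ' : φ'.hom.left = eqToHom h ≫ φ.hom.left)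
  have sq : (eqToHom h ≫ X.obj.hom) ≫ φ.hom.right = X'.obj.hom ≫ φ'.hom.right := by
    rw [Category.assoc, ← Arrow.w φ.hom, ← Category.assoc, ← hφ', Arrow.w φ'.hom]
  obtain ⟨d, ⟨hd, hdφ⟩, hd_uniq⟩ := hLR.existsUnique_lift _ _ X'.property hφ sq
  refine ⟨ObjectProperty.homMk (Arrow.homMk (eqToHom h) d hd.symm), ⟨rfl, ?_⟩, ?_⟩
  · ext
    exacts [hφ'.symm, hdφ]
  · rintro ψ ⟨hψ : ψ.hom.left = eqToHom h, rfl⟩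
    ext
    · exact hψ
    · exact hd_uniq _ ⟨by rw [← Arrow.w ψ.hom, hψ], rfl⟩

lemma mem_right_of_isCartesian_arrowSource {X Y : Arrows L}
    (φ : X ⟶ Y) (hφ : IsCartesian (arrowSource L) φ) : R φ.hom.right := by
  obtain ⟨M, l, r, hl, hr, hlr⟩ := hLR.fac φ.hom.right
  let X' : Arrows L := ⟨Arrow.mk (X.obj.hom ≫ l), hLR.comp_mem_left _ _ X.property hl⟩
  let χ : X ⟶ X' := ObjectProperty.homMk (Arrow.homMk (𝟙 _) l)
  let φ' : X' ⟶ Y := ObjectProperty.homMk (Arrow.homMk φ.hom.left r (by simp [X', hlr]))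
  have : IsIso χ := hφ.isIso_of_comp_eq (hLR.isCartesian_arrowSource_of_mem_right φ' hr) rfl rfl
    (by ext <;> simp [χ, φ', hlr])
  have : IsIso l := (ObjectProperty.ι _ ⋙ Arrow.rightFunc).map_isIso χ
  rw [← hlr]
  exact hLR.comp_mem_right _ _ (hLR.mem_right_of_isIso l) hr

lemma isCartesian_arrowSource_iff {X Y : Arrows L} (φ : X ⟶ Y) :
    IsCartesian (arrowSource L) φ ↔ R φ.hom.right :=
  ⟨hLR.mem_right_of_isCartesian_arrowSource φ, hLR.isCartesian_arrowSource_of_mem_right φ⟩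

lemma isFibration_arrowSource : IsFibration (arrowSource L) := by
  refine ⟨fun Y i f => ?_, fun _ _ _ φ ψ hφ hψ => ?_⟩
  · obtain ⟨M, l, r, hl, hr, hlr⟩ := hLR.fac (f ≫ Y.obj.hom)
    exact ⟨⟨Arrow.mk l, hl⟩, ObjectProperty.homMk (Arrow.homMk f r hlr.symm), rfl,
      hLR.isCartesian_arrowSource_of_mem_right _ hr, (Category.id_comp f).symm⟩
  · rw [isCartesian_arrowSource_iff hLR] at hφ hψ ⊢
    exact hLR.comp_mem_right _ _ hφ hψ

lemma isCocartesian_arrowTarget_of_mem_left {X Y : Arrows R}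
    (φ : X ⟶ Y) (hφ : L φ.hom.left) : IsCocartesian (arrowTarget R) φ := by
  intro Y' φ' (h : Y.obj.right = Y'.obj.right) (hφ' : φ'.hom.right = φ.hom.right ≫ eqToHom h)
  have sq : φ'.hom.left ≫ Y'.obj.hom = φ.hom.left ≫ Y.obj.hom ≫ eqToHom h := by
    rw [Arrow.w φ'.hom, hφ', ← Category.assoc, ← Arrow.w φ.hom, Category.assoc]
  obtain ⟨d, ⟨hφd, hd⟩, hd_uniq⟩ := hLR.existsUnique_lift _ _ hφ Y'.property sq
  refine ⟨ObjectProperty.homMk (Arrow.homMk d (eqToHom h) hd), ⟨rfl, ?_⟩, ?_⟩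
  · ext
    exacts [hφd, hφ'.symm]
  · rintro ψ ⟨hψ : ψ.hom.right = eqToHom h, rfl⟩
    ext
    · exact hd_uniq _ ⟨rfl, by rw [Arrow.w ψ.hom, hψ]⟩
    · exact hψ

lemma mem_left_of_isCocartesian_arrowTarget {X Y : Arrows R}
    (φ : X ⟶ Y) (hφ : IsCocartesian (arrowTarget R) φ) : L φ.hom.left := by
  obtain ⟨M, l, r, hl, hr, hlr⟩ := hLR.fac φ.hom.left
  let Y' : Arrows R := ⟨Arrow.mk (r ≫ Y.obj.hom), hLR.comp_mem_right _ _ hr Y.property⟩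
  let φ' : X ⟶ Y' :=
    ObjectProperty.homMk (Arrow.homMk l φ.hom.right (by simp [Y', ← Arrow.w φ.hom, ← hlr]))
  let χ : Y' ⟶ Y := ObjectProperty.homMk (Arrow.homMk r (𝟙 _))
  have : IsIso χ := hφ.isIso_of_comp_eq (hLR.isCocartesian_arrowTarget_of_mem_left φ' hl) rfl rfl
    (by ext <;> simp [χ, φ', hlr])
  have : IsIso r := (ObjectProperty.ι _ ⋙ Arrow.leftFunc).map_isIso χ
  rw [← hlr]
  exact hLR.comp_mem_left _ _ hl (hLR.mem_left_of_isIso r)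

lemma isCocartesian_arrowTarget_iff {X Y : Arrows R} (φ : X ⟶ Y) :
    IsCocartesian (arrowTarget R) φ ↔ L φ.hom.left :=
  ⟨hLR.mem_left_of_isCocartesian_arrowTarget φ, hLR.isCocartesian_arrowTarget_of_mem_left φ⟩

lemma isFibration_arrowTarget_op : IsFibration (arrowTarget R).op := by
  refine ⟨fun Y i f => ?_, fun _ _ _ φ ψ hφ hψ => ?_⟩
  · obtain ⟨M, l, r, hl, hr, hlr⟩ := hLR.fac (Y.unop.obj.hom ≫ f.unop)
    let φ : Y.unop ⟶ ⟨Arrow.mk r, hr⟩ := ObjectProperty.homMk (Arrow.homMk l f.unop hlr)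
    exact ⟨_, φ.op, rfl, (isCartesian_op_iff _).2 (hLR.isCocartesian_arrowTarget_of_mem_left φ hl),
      (Category.id_comp f).symm⟩
  · rw [isCartesian_op_iff, isCocartesian_arrowTarget_iff hLR] at hφ hψ ⊢
    exact hLR.comp_mem_left _ _ hψ hφ

end FactorizationSystem

end ArrowCategory

variable {I : Type u₃} [Category.{v₃} I]

/-- For a factorization system `⟨L, R⟩` on `I`, the source
functor `s : Arrowᴸ(I) ⥤ I` is a Grothendieck fibration, with a morphism
`s`-cartesian if and only if its target component lies in `R`; dually, the
target functor `t : Arrowᴿ(I) ⥤ I` is a Grothendieck opfibration, with a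
morphism `t`-cocartesian if and only if its source component lies in `L`. -/
theorem stmt7 (L R : MorphismProperty I) (hLR : FactorizationSystem I L R) :
    (IsFibration
        (ObjectProperty.ι (fun f : Arrow I => L f.hom) ⋙ Arrow.leftFunc) ∧
      ∀ {X Y : ObjectProperty.FullSubcategory (fun f : Arrow I => L f.hom)} (φ : X ⟶ Y),
        IsCartesian
          (ObjectProperty.ι (fun f : Arrow I => L f.hom) ⋙ Arrow.leftFunc) φ ↔
        R φ.hom.right) ∧
    (IsFibration
        (ObjectProperty.ι (fun f : Arrow I => R f.hom) ⋙ Arrow.rightFunc).op ∧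
      ∀ {X Y : ObjectProperty.FullSubcategory (fun f : Arrow I => R f.hom)} (φ : X ⟶ Y),
        IsCartesian
          (ObjectProperty.ι (fun f : Arrow I => R f.hom) ⋙ Arrow.rightFunc).op
          φ.op ↔
        L φ.hom.left) :=
  ⟨⟨hLR.isFibration_arrowSource, hLR.isCartesian_arrowSource_iff⟩,
    ⟨hLR.isFibration_arrowTarget_op,
      fun φ => (isCartesian_op_iff φ.op).trans (hLR.isCocartesian_arrowTarget_iff φ)⟩⟩

end Paper
end

section
/- Let ⟨L, R⟩ be a factorization system on a category I (L, R classes of morphisms containing the identities and closed under composition, L ∩ R = isomorphisms, every morphism factoring as a morphism in L followed by a morphism in R uniquely up to unique isomorphism), and let π : I' ⥤ I be a Grothendieck fibration. Define classes of morphisms of I': L' consists of the morphisms f with π(f) ∈ L, and R' consists of the morphisms f with π(f) ∈ R that are π-cartesian. Then ⟨L', R'⟩ is a factorization system on I'. -/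
open CategoryTheory

namespace Paper

variable {I : Type u₃} [Category.{v₃} I] {I' : Type u₁} [Category.{v₁} I']

/-! In a fibration cartesian morphisms are strongly cartesian. Hence a factorization `l ≫ r` of
`π f` lifts: take a cartesian lift of `r` and lift `f` through it. Given two lifted
factorizations, the base supplies a unique comparison isomorphism of the middle objects, and it
lifts uniquely along the cartesian right parts. -/

namespace FactorizationSystem

variable {L R : MorphismProperty I}

lemma left_of_isIso (hLR : FactorizationSystem I L R) {X Y : I} (f : X ⟶ Y) [IsIso f] : L f :=
  ((hLR.inter_iso f).2 inferInstance).1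

lemma right_of_isIso (hLR : FactorizationSystem I L R) {X Y : I} (f : X ⟶ Y) [IsIso f] : R f :=
  ((hLR.inter_iso f).2 inferInstance).2

end FactorizationSystem

lemma isCartesian_of_isIso (π : I' ⥤ I) {a b : I'} (f : a ⟶ b) [IsIso f] :
    IsCartesian π f := by
  intro a' φ' h hφ'
  refine ⟨φ' ≫ inv f, ⟨?_, by simp⟩, ?_⟩
  · simp [hφ']
  · rintro ψ ⟨-, rfl⟩
    simp

namespace IsCartesian

variable {π : I' ⥤ I} {a b : I'} {φ : a ⟶ b}

/-- In a fibration, cartesian morphisms are strongly cartesian: they lift morphisms over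
arbitrary, not only vertical, morphisms of the base. -/
lemma existsUnique_lift (hπ : IsFibration π) (hφ : IsCartesian π φ) {X : I'}
    (f : X ⟶ b) (g : π.obj X ⟶ π.obj a) (hg : g ≫ π.map φ = π.map f) :
    ∃! ψ : X ⟶ a, π.map ψ = g ∧ ψ ≫ φ = f := by
  -- Through a cartesian lift `χ` of `g`: `χ ≫ φ` is cartesian and `f` is vertical over it.
  obtain ⟨c, χ, h, hχ, hχ_map⟩ := hπ.1 a (π.obj X) g
  obtain ⟨ζ, ⟨hζ_map, hζ⟩, hζ_uniq⟩ :=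
    hπ.2 χ φ hχ hφ X f h.symm (by simp [hχ_map, hg])
  refine ⟨ζ ≫ χ, ⟨by simp [hζ_map, hχ_map], by rw [Category.assoc, hζ]⟩, ?_⟩
  rintro ψ ⟨rfl, rfl⟩
  obtain ⟨ζ', ⟨hζ'_map, rfl⟩, -⟩ := hχ X ψ h.symm (by simp [hχ_map])
  rw [hζ_uniq ζ' ⟨hζ'_map, (Category.assoc _ _ _).symm⟩]

lemma hom_ext_s8 (hπ : IsFibration π) (hφ : IsCartesian π φ) {X : I'} {ψ₁ ψ₂ : X ⟶ a}
    (h_map : π.map ψ₁ = π.map ψ₂) (h : ψ₁ ≫ φ = ψ₂ ≫ φ) : ψ₁ = ψ₂ :=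
  (hφ.existsUnique_lift hπ (ψ₂ ≫ φ) (π.map ψ₂) (π.map_comp _ _).symm).unique
    ⟨h_map, h⟩ ⟨rfl, rfl⟩

lemma exists_iso_lift (hπ : IsFibration π) (hφ : IsCartesian π φ) {M : I'} {r : M ⟶ b}
    (hr : IsCartesian π r) (e : π.obj a ≅ π.obj M) (he : e.hom ≫ π.map r = π.map φ) :
    ∃ E : a ≅ M, π.map E.hom = e.hom ∧ E.hom ≫ r = φ := by
  obtain ⟨e₁, ⟨he₁_map, he₁⟩, -⟩ := hr.existsUnique_lift hπ φ e.hom he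
  obtain ⟨e₂, ⟨he₂_map, he₂⟩, -⟩ :=
    hφ.existsUnique_lift hπ r e.inv (by rw [← he, e.inv_hom_id_assoc])
  refine ⟨⟨e₁, e₂, ?_, ?_⟩, he₁_map, he₁⟩
  · exact hφ.hom_ext_s8 hπ (by simp [he₁_map, he₂_map]) (by simp [he₂, he₁])
  · exact hr.hom_ext_s8 hπ (by simp [he₁_map, he₂_map]) (by simp [he₁, he₂])

lemma isIso_of_isIso_map (hπ : IsFibration π) (hφ : IsCartesian π φ) [IsIso (π.map φ)] :
    IsIso φ := by
  obtain ⟨E, -, hE⟩ := hφ.exists_iso_lift hπ (isCartesian_of_isIso π (𝟙 b))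
    (asIso (π.map φ)) (by simp)
  rw [← hE, Category.comp_id]
  infer_instance

end IsCartesian

namespace FactorizationSystem

variable {L R : MorphismProperty I} {π : I' ⥤ I}

lemma left_and_right_and_isCartesian_iff_isIso (hLR : FactorizationSystem I L R)
    (hπ : IsFibration π) {X Y : I'} (f : X ⟶ Y) :
    (L (π.map f) ∧ R (π.map f) ∧ IsCartesian π f) ↔ IsIso f := by
  constructor
  · rintro ⟨hL, hR, hf⟩
    have := (hLR.inter_iso (π.map f)).1 ⟨hL, hR⟩
    exact hf.isIso_of_isIso_map hπ
  · intro
    exact ⟨hLR.left_of_isIso _, hLR.right_of_isIso _, isCartesian_of_isIso π f⟩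

lemma exists_fac_of_isFibration (hLR : FactorizationSystem I L R) (hπ : IsFibration π)
    {X Y : I'} (f : X ⟶ Y) :
    ∃ (M : I') (l : X ⟶ M) (r : M ⟶ Y),
      L (π.map l) ∧ (R (π.map r) ∧ IsCartesian π r) ∧ l ≫ r = f := by
  obtain ⟨M, l, r, hl, hr, hlr⟩ := hLR.fac (π.map f)
  obtain ⟨a, φ, h, hφ, hφ_map⟩ := hπ.1 Y M r
  obtain ⟨ψ, ⟨hψ_map, hψ⟩, -⟩ :=
    hφ.existsUnique_lift hπ f (l ≫ eqToHom h.symm) (by simp [hφ_map, hlr])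
  refine ⟨a, ψ, φ, ?_, ⟨?_, hφ⟩, hψ⟩
  · rw [hψ_map]
    exact hLR.comp_mem_left _ _ hl (hLR.left_of_isIso _)
  · rw [hφ_map]
    exact hLR.comp_mem_right _ _ (hLR.right_of_isIso _) hr

lemma existsUnique_iso_of_isFibration (hLR : FactorizationSystem I L R) (hπ : IsFibration π)
    {X Y : I'} (f : X ⟶ Y) (M M' : I') (l : X ⟶ M) (r : M ⟶ Y) (l' : X ⟶ M') (r' : M' ⟶ Y)
    (hl : L (π.map l)) (hr : R (π.map r) ∧ IsCartesian π r)
    (hl' : L (π.map l')) (hr' : R (π.map r') ∧ IsCartesian π r')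
    (hf : l ≫ r = f) (hf' : l' ≫ r' = f) :
    ∃! E : M ≅ M', l ≫ E.hom = l' ∧ E.hom ≫ r' = r := by
  obtain ⟨e, ⟨he_left, he_right⟩, he_uniq⟩ :=
    hLR.uniq (π.map f) _ _ _ _ _ _ hl hr.1 hl' hr'.1
      (by rw [← π.map_comp, hf]) (by rw [← π.map_comp, hf'])
  obtain ⟨E, hE_map, hE⟩ := hr.2.exists_iso_lift hπ hr'.2 e he_right
  refine ⟨E, ⟨?_, hE⟩, fun E' ⟨hE'_left, hE'_right⟩ => Iso.ext ?_⟩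
  · exact hr'.2.hom_ext_s8 hπ (by simp [hE_map, he_left]) (by simp [hE, hf, hf'])
  · have hE'_map : π.mapIso E' = e :=
      he_uniq _ ⟨by simp [← π.map_comp, hE'_left], by simp [← π.map_comp, hE'_right]⟩
    exact hr'.2.hom_ext_s8 hπ (by rw [hE_map, ← hE'_map, π.mapIso_hom]) (by rw [hE, hE'_right])

end FactorizationSystem

/-- A factorization system `⟨L, R⟩` on `I` lifts along a
Grothendieck fibration `π : I' ⥤ I` to the factorization system `⟨L', R'⟩` on
`I'`, where `L'` consists of the morphisms whose image lies in `L`, and `R'` of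
the `π`-cartesian morphisms whose image lies in `R`. -/
theorem stmt8 (L R : MorphismProperty I) (hLR : FactorizationSystem I L R)
    (π : I' ⥤ I) (hπ : IsFibration π) :
    FactorizationSystem I'
      (fun _ _ f => L (π.map f))
      (fun _ _ f => R (π.map f) ∧ IsCartesian π f) := by
  refine
    { id_mem_left := fun X => ?_
      comp_mem_left := fun f g hf hg => ?_
      id_mem_right := fun X => ⟨?_, isCartesian_of_isIso π (𝟙 X)⟩
      comp_mem_right := fun f g hf hg => ⟨?_, hπ.2 f g hf.2 hg.2⟩
      inter_iso := hLR.left_and_right_and_isCartesian_iff_isIso hπ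
      fac := hLR.exists_fac_of_isFibration hπ
      uniq := hLR.existsUnique_iso_of_isFibration hπ }
  · simpa using hLR.id_mem_left (π.obj X)
  · simpa using hLR.comp_mem_left _ _ hf hg
  · simpa using hLR.id_mem_right (π.obj X)
  · simpa using hLR.comp_mem_right _ _ hf.1 hg.1

end Paper
end

section
/- Let π₀ : 𝒞 ⥤ I and π₁ : 𝒞' ⥤ I be functors, and suppose π₁ is a Grothendieck fibration. Then every functor over I from 𝒞 to 𝒞' — that is, every pair (γ, α) of a functor γ : 𝒞 ⥤ 𝒞' and a natural isomorphism α : π₁ ∘ γ ≅ π₀ — is isomorphic over I to a strict functor: there exist a functor γ' : 𝒞 ⥤ 𝒞' with π₁ ∘ γ' = π₀ and a natural isomorphism β : γ ≅ γ' such that for every object c of 𝒞 one has π₁(β_c) = α_c. Moreover (γ', β) is unique up to unique isomorphism: for any two such pairs (γ'₁, β₁) and (γ'₂, β₂) there is a unique natural isomorphism η : γ'₁ ≅ γ'₂ with π₁(η_c) = id for all c and η ∘ β₁ = β₂. The same statement holds when π₁ is a Grothendieck opfibration. -/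
/-! A fibration (and, dually, an opfibration) is an isofibration: a cartesian lift of the
isomorphism `α.inv.app c` is itself invertible, since a cartesian morphism over an isomorphism
is. Over an isofibration, transporting `γ` along isomorphisms `γ c ≅ γ' c` lifting `α` gives a
strict functor `γ'`; the comparison `η` between two strictifications is forced to be
`β₁⁻¹ ≫ β₂`. -/

open CategoryTheory

namespace Paper

open Opposite

variable {C : Type u₁} [Category.{v₁} C] {D : Type u₂} [Category.{v₂} D]
  {I : Type u₃} [Category.{v₃} I]

def IsIsofibration (π : D ⥤ I) : Prop :=
  ∀ (b : D) (i : I) (f : π.obj b ≅ i),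
    ∃ (a : D) (e : b ≅ a) (h : π.obj a = i), π.map e.hom = f.hom ≫ eqToHom h.symm

lemma map_hom_eq_iff_map_inv_eq (π : D ⥤ I) {b a : D} (e : b ≅ a) {i : I}
    (f : π.obj b ≅ i) (h : π.obj a = i) :
    π.map e.hom = f.hom ≫ eqToHom h.symm ↔ π.map e.inv = eqToHom h ≫ f.inv :=
  (Iso.inv_eq_inv (π.mapIso e) (f ≪≫ eqToIso h.symm)).symm

theorem IsCartesian.isIso_of_isIso_map_s10 {π : D ⥤ I} (hπ : IsFibration π) {a b : D}
    {φ : a ⟶ b} (hφ : IsCartesian π φ) [IsIso (π.map φ)] : IsIso φ := by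
  obtain ⟨e, χ, h, hχ, hχπ⟩ := hπ.1 a (π.obj b) (inv (π.map φ))
  have hχφπ : π.map (χ ≫ φ) = eqToHom h := by simp [hχπ]
  -- `χ ≫ φ` is cartesian over an identity, so `𝟙 b` factors through it.
  obtain ⟨ψ, ⟨hψπ, hψ⟩, -⟩ :=
    hπ.2 χ φ hχ hφ b (𝟙 b) h.symm (by simp [hχφπ])
  refine ⟨ψ ≫ χ, ?_, by simpa using hψ⟩
  exact (hφ a φ rfl (by simp)).unique
    ⟨by simp [hψπ, hχπ], by simpa using congrArg (φ ≫ ·) hψ⟩ ⟨by simp, by simp⟩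

theorem IsFibration.isIsofibration {π : D ⥤ I} (hπ : IsFibration π) : IsIsofibration π := by
  intro b i f
  obtain ⟨a, φ, h, hφ, hφπ⟩ := hπ.1 b i f.inv
  have : IsIso (π.map φ) := by rw [hφπ]; infer_instance
  have : IsIso φ := hφ.isIso_of_isIso_map_s10 hπ
  exact ⟨a, (asIso φ).symm, h, (map_hom_eq_iff_map_inv_eq π _ f h).2 hφπ⟩

theorem IsIsofibration.of_op {π : D ⥤ I} (hπ : IsIsofibration π.op) : IsIsofibration π := by
  intro b i f
  obtain ⟨a, e, h, he⟩ := hπ (op b) (op i) f.symm.op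
  refine ⟨a.unop, e.unop.symm, congrArg unop h, ?_⟩
  have := congrArg Quiver.Hom.unop ((map_hom_eq_iff_map_inv_eq π.op e f.symm.op h).1 he)
  simpa [eqToHom_unop] using this

theorem IsIsofibration.exists_strict_iso {π₀ : C ⥤ I} {π₁ : D ⥤ I} (hπ₁ : IsIsofibration π₁)
    (γ : C ⥤ D) (α : γ ⋙ π₁ ≅ π₀) :
    ∃ (γ' : C ⥤ D) (hs : γ' ⋙ π₁ = π₀) (β : γ ≅ γ'),
      ∀ c : C, π₁.map (β.hom.app c) =
        α.hom.app c ≫ eqToHom (Functor.congr_obj hs c).symm := by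
  choose a e h he using fun c => hπ₁ (γ.obj c) (π₀.obj c) (α.app c)
  have hs : γ.copyObj a e ⋙ π₁ = π₀ :=
    Functor.ext_of_iso (Functor.isoWhiskerRight (γ.isoCopyObj a e).symm π₁ ≪≫ α) h fun c => by
      change π₁.map (e c).inv ≫ α.hom.app c = eqToHom (h c)
      rw [(map_hom_eq_iff_map_inv_eq π₁ (e c) (α.app c) (h c)).1 (he c)]
      simp
  exact ⟨γ.copyObj a e, hs, γ.isoCopyObj a e, he⟩

theorem existsUnique_iso_of_isos_over {π₀ : C ⥤ I} {π₁ : D ⥤ I} {γ : C ⥤ D}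
    (α : γ ⋙ π₁ ≅ π₀) (γ'₁ γ'₂ : C ⥤ D) (hs₁ : γ'₁ ⋙ π₁ = π₀) (hs₂ : γ'₂ ⋙ π₁ = π₀)
    (β₁ : γ ≅ γ'₁) (β₂ : γ ≅ γ'₂)
    (hβ₁ : ∀ c : C, π₁.map (β₁.hom.app c) =
      α.hom.app c ≫ eqToHom (Functor.congr_obj hs₁ c).symm)
    (hβ₂ : ∀ c : C, π₁.map (β₂.hom.app c) =
      α.hom.app c ≫ eqToHom (Functor.congr_obj hs₂ c).symm) :
    ∃! η : γ'₁ ≅ γ'₂,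
      (∀ c : C, π₁.map (η.hom.app c) =
        eqToHom ((Functor.congr_obj hs₁ c).trans (Functor.congr_obj hs₂ c).symm)) ∧
      β₁ ≪≫ η = β₂ := by
  refine ⟨β₁.symm ≪≫ β₂, ⟨fun c => ?_, by ext; simp⟩, fun η ⟨_, hη⟩ => by ext; simp [← hη]⟩
  have hβ₁inv :=
    (map_hom_eq_iff_map_inv_eq π₁ (β₁.app c) (α.app c) (Functor.congr_obj hs₁ c)).1 (hβ₁ c)
  simp only [Iso.app_inv] at hβ₁inv
  simp [hβ₁inv, hβ₂ c]

/-- **Statement 11.** If `π₁ : 𝒞' ⥤ I` is a Grothendieck fibration (or an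
opfibration), then every functor over `I` from `π₀ : 𝒞 ⥤ I` to `π₁` — a pair of
a functor `γ` with a natural isomorphism `α : γ ⋙ π₁ ≅ π₀` — is isomorphic over
`I` to a strict functor, uniquely up to unique isomorphism. -/
theorem stmt11 (π₀ : C ⥤ I) (π₁ : D ⥤ I)
    (hπ₁ : IsFibration π₁ ∨ IsFibration π₁.op)
    (γ : C ⥤ D) (α : γ ⋙ π₁ ≅ π₀) :
    (∃ (γ' : C ⥤ D) (hs : γ' ⋙ π₁ = π₀) (β : γ ≅ γ'),
      ∀ c : C, π₁.map (β.hom.app c) =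
        α.hom.app c ≫ eqToHom (Functor.congr_obj hs c).symm) ∧
    (∀ (γ'₁ γ'₂ : C ⥤ D) (hs₁ : γ'₁ ⋙ π₁ = π₀) (hs₂ : γ'₂ ⋙ π₁ = π₀)
      (β₁ : γ ≅ γ'₁) (β₂ : γ ≅ γ'₂),
      (∀ c : C, π₁.map (β₁.hom.app c) =
        α.hom.app c ≫ eqToHom (Functor.congr_obj hs₁ c).symm) →
      (∀ c : C, π₁.map (β₂.hom.app c) =
        α.hom.app c ≫ eqToHom (Functor.congr_obj hs₂ c).symm) →
      ∃! η : γ'₁ ≅ γ'₂,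
        (∀ c : C, π₁.map (η.hom.app c) =
          eqToHom ((Functor.congr_obj hs₁ c).trans (Functor.congr_obj hs₂ c).symm)) ∧
        β₁ ≪≫ η = β₂) := by
  have hiso : IsIsofibration π₁ :=
    hπ₁.elim IsFibration.isIsofibration fun h => h.isIsofibration.of_op
  exact ⟨hiso.exists_strict_iso γ α, existsUnique_iso_of_isos_over α⟩

end Paper
end

section
/- Let eq be the category whose objects are pairs ([n], e) of an object [n] of the simplex category Δ and an arbitrary function e : [n] → {0, 1}, and whose morphisms ([n], e) ⟶ ([m], e') are the monotone maps f : [n] ⟶ [m] with e' ∘ f = e. For l ∈ {0, 1}, say a morphism f is l-special if f restricts to a bijection e⁻¹(l) → e'⁻¹(l). Then every morphism of eq factors uniquely as a 0-special morphism followed by a 1-special morphism, and also uniquely as a 1-special morphism followed by a 0-special morphism; that is, the classes of 0-special and of 1-special maps are each closed under composition and contain the identities, and they form a factorization system on eq in either order. -/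
open CategoryTheory

namespace Paper

/-- The category `eq`: objects are pairs of an object `[n]` of the simplex
category and a function `e : [n] → {0,1}`; morphisms are the monotone maps
compatible with the colourings. -/
structure EqCat where
  obj : SimplexCategory
  col : Fin (obj.len + 1) → Bool

instance : Category EqCat where
  Hom a b := {f : a.obj ⟶ b.obj // ∀ i, b.col (f.toOrderHom i) = a.col i}
  id a := ⟨𝟙 a.obj, fun i => rfl⟩
  comp {a b c} f g := ⟨f.1 ≫ g.1, fun i =>
    (g.2 (f.1.toOrderHom i)).trans (f.2 i)⟩
  id_comp f := Subtype.ext (Category.id_comp f.1)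
  comp_id f := Subtype.ext (Category.comp_id f.1)
  assoc f g h := Subtype.ext (Category.assoc f.1 g.1 h.1)

/-- A morphism of `eq` is `l`-special (for `l ∈ {0,1}`) if it restricts to a
bijection between the preimages of `l` under the colourings. -/
def LSpecial (l : Bool) {a b : EqCat} (f : a ⟶ b) : Prop :=
  Function.Bijective
    (fun x : {i : Fin (a.obj.len + 1) // a.col i = l} =>
      (⟨f.1.toOrderHom x.1, by rw [f.2, x.2]⟩ : {j : Fin (b.obj.len + 1) // b.col j = l}))

/-!
To factor `f : a ⟶ b` as a `c`-special map followed by a `(!c)`-special one, take as middle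
object the points of colour `c` of `a` together with the points of colour `!c` of `b`, an
`i` of the first kind sitting at `(f i, i)` and a `j` of the second kind at `(j, 0)` in the
lexicographic order on `[b] × [a]`.

For uniqueness, `c`-special maps have the left lifting property against `(!c)`-special ones.
The lift comparing two factorizations is then special for both colours, hence an isomorphism,
and the only isomorphisms of `eq` are identities.
-/

theorem _root_.Set.BijOn.of_comp_left {α β γ : Type*} {s : Set α} {t : Set β} {p : Set γ}
    {f : α → β} {g : β → γ} (hf : Set.BijOn f s t) (h : Set.BijOn (g ∘ f) s p) :
    Set.BijOn g t p :=
  hf.image_eq ▸ (Set.bijOn_comp_iff hf.injOn).mp h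

theorem _root_.Set.BijOn.of_comp_right {α β γ : Type*} {s : Set α} {t : Set β} {p : Set γ}
    {f : α → β} {g : β → γ} (hg : Set.BijOn g t p) (h : Set.BijOn (g ∘ f) s p)
    (hf : Set.MapsTo f s t) : Set.BijOn f s t := by
  refine ⟨hf, h.injOn.of_comp, fun z hz => ?_⟩
  obtain ⟨x, hx, e⟩ := h.surjOn (hg.mapsTo hz)
  exact ⟨x, hx, hg.injOn (hf hx) hz e⟩

namespace EqCat

instance {a b : EqCat} : CoeFun (a ⟶ b) (fun _ => Fin (a.obj.len + 1) → Fin (b.obj.len + 1)) :=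
  ⟨fun f => f.1.toOrderHom⟩

variable {a b d : EqCat}

lemma monotone_hom (f : a ⟶ b) : Monotone f := f.1.toOrderHom.monotone

@[simp]
lemma col_hom (f : a ⟶ b) (i : Fin (a.obj.len + 1)) : b.col (f i) = a.col i := f.2 i

lemma hom_ext {f g : a ⟶ b} (h : ∀ i, f i = g i) : f = g :=
  Subtype.ext (SimplexCategory.Hom.ext _ _ (OrderHom.ext _ _ (funext h)))

def mkHom (φ : Fin (a.obj.len + 1) →o Fin (b.obj.len + 1)) (hφ : ∀ i, b.col (φ i) = a.col i) :
    a ⟶ b :=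
  ⟨SimplexCategory.Hom.mk φ, hφ⟩

def forget : EqCat ⥤ SimplexCategory where
  obj := obj
  map f := f.1

lemma eq_id_of_isIso (f : a ⟶ a) [IsIso f] : f = 𝟙 a :=
  Subtype.ext (SimplexCategory.eq_id_of_isIso (forget.map f))

lemma iso_eq_refl (e : a ≅ a) : e = Iso.refl a :=
  Iso.ext (eq_id_of_isIso e.hom)

lemma skeletal : Skeletal EqCat := by
  rintro ⟨n, col⟩ ⟨m, col'⟩ ⟨e⟩
  obtain rfl : n = m := SimplexCategory.skeletal ⟨forget.mapIso e⟩
  have he : e.hom.1 = 𝟙 n :=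
    congrArg Iso.hom (SimplexCategory.iso_eq_iso_refl (forget.mapIso e : n ≅ n))
  congr 1
  funext i
  simpa [he] using (e.hom.2 i).symm

lemma isIso_of_bijective (f : a ⟶ b) (hf : Function.Bijective f) : IsIso f := by
  have : IsIso f.1 := SimplexCategory.isIso_of_bijective hf
  have hinv : ∀ j, f ((inv f.1).toOrderHom j) = j := fun j =>
    congrArg (fun φ => φ.toOrderHom j) (IsIso.inv_hom_id f.1)
  refine ⟨⟨inv f.1, fun j => ?_⟩, Subtype.ext (IsIso.hom_inv_id f.1),
    Subtype.ext (IsIso.inv_hom_id f.1)⟩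
  rw [← col_hom f, hinv]

lemma mapsTo_col (f : a ⟶ b) (c : Bool) : Set.MapsTo f {i | a.col i = c} {j | b.col j = c} :=
  fun i hi => (col_hom f i).trans hi

lemma lspecial_iff_bijOn {c : Bool} (f : a ⟶ b) :
    LSpecial c f ↔ Set.BijOn f {i | a.col i = c} {j | b.col j = c} := by
  refine ⟨fun h => ⟨mapsTo_col f c, fun i hi j hj e => ?_, fun j hj => ?_⟩, fun h => h.bijective⟩
  · exact congrArg Subtype.val (h.1 (a₁ := ⟨i, hi⟩) (a₂ := ⟨j, hj⟩) (Subtype.ext e))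
  · obtain ⟨⟨i, hi⟩, e⟩ := h.2 ⟨j, hj⟩
    exact ⟨i, hi, congrArg Subtype.val e⟩

lemma lspecial_id (c : Bool) (a : EqCat) : LSpecial c (𝟙 a) :=
  (lspecial_iff_bijOn _).mpr (Set.bijOn_id _)

lemma lspecial_comp {c : Bool} {f : a ⟶ b} {g : b ⟶ d} (hf : LSpecial c f) (hg : LSpecial c g) :
    LSpecial c (f ≫ g) := by
  rw [lspecial_iff_bijOn] at *
  exact hg.comp hf

lemma lspecial_of_comp_left {c : Bool} {f : a ⟶ b} {g : b ⟶ d} (hf : LSpecial c f)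
    (hfg : LSpecial c (f ≫ g)) : LSpecial c g := by
  rw [lspecial_iff_bijOn] at *
  exact hf.of_comp_left hfg

lemma lspecial_of_comp_right {c : Bool} {f : a ⟶ b} {g : b ⟶ d} (hg : LSpecial c g)
    (hfg : LSpecial c (f ≫ g)) : LSpecial c f := by
  rw [lspecial_iff_bijOn] at *
  exact hg.of_comp_right hfg (mapsTo_col f c)

lemma bijective_of_lspecial {f : a ⟶ b} (h : ∀ c, LSpecial c f) : Function.Bijective f := by
  simp only [lspecial_iff_bijOn] at h
  refine ⟨fun i j e => (h (a.col i)).injOn (show a.col i = a.col i from rfl) ?_ e, fun j => ?_⟩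
  · show a.col j = a.col i
    rw [← col_hom f i, e, col_hom]
  · obtain ⟨i, -, e⟩ := (h (b.col j)).surjOn (rfl : b.col j = b.col j)
    exact ⟨i, e⟩

lemma isIso_iff_lspecial {c : Bool} (f : a ⟶ b) : IsIso f ↔ LSpecial c f ∧ LSpecial (!c) f := by
  refine ⟨fun _ => ?_, fun ⟨h, h'⟩ => isIso_of_bijective f (bijective_of_lspecial fun c' => ?_)⟩
  · obtain rfl := skeletal ⟨asIso f⟩
    rw [eq_id_of_isIso f]
    exact ⟨lspecial_id _ _, lspecial_id _ _⟩
  · cases c <;> cases c' <;> assumption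

section Lifting

variable {c : Bool} {A B X Y : EqCat} {l : A ⟶ B} {r : X ⟶ Y} {u : A ⟶ X} {v : B ⟶ Y}

lemma exists_lift_apply (hl : LSpecial c l) (hr : LSpecial (!c) r) (sq : u ≫ r = l ≫ v)
    (p : Fin (B.obj.len + 1)) :
    ∃ q, X.col q = B.col p ∧ r q = v p ∧ ∀ i, l i = p → u i = q := by
  rw [lspecial_iff_bijOn] at hl hr
  have hsq (i : Fin (A.obj.len + 1)) : r (u i) = v (l i) := congrArg (fun φ : A ⟶ Y => φ i) sq
  by_cases hp : B.col p = c
  · obtain ⟨i, hi, rfl⟩ := hl.surjOn hp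
    refine ⟨u i, by simp, hsq i, fun i' e => ?_⟩
    have hi' : A.col i' = c := by rw [← col_hom l, e, hp]
    rw [hl.injOn hi' hi e]
  · have hp' : B.col p = !c := Bool.eq_not_iff.mpr hp
    obtain ⟨q, hq, e⟩ := hr.surjOn (show Y.col (v p) = !c by simp [hp'])
    refine ⟨q, hq.trans hp'.symm, e, fun i hi => hr.injOn ?_ hq ?_⟩
    · show X.col (u i) = !c
      rw [col_hom, ← col_hom l, hi, hp']
    · rw [hsq, hi, e]

/-- Where `r ∘ d = v` does not already force `d p < d q`, the points `p` and `q` have the same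
colour, and are then compared through `l` (colour `c`) or through `r` (colour `!c`). -/
lemma monotone_of_lift (hl : LSpecial c l) (hr : LSpecial (!c) r)
    {d : Fin (B.obj.len + 1) → Fin (X.obj.len + 1)} (hcol : ∀ p, X.col (d p) = B.col p)
    (hrd : ∀ p, r (d p) = v p) (hld : ∀ i, d (l i) = u i) : Monotone d := by
  rw [lspecial_iff_bijOn] at hl hr
  intro p q hpq
  rcases hpq.eq_or_lt with rfl | hlt
  · rfl
  have hv : r (d p) ≤ r (d q) := by rw [hrd, hrd]; exact monotone_hom v hpq
  rcases hv.lt_or_eq with hv | hv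
  · exact ((monotone_hom r).reflect_lt hv).le
  have hcpq : B.col p = B.col q := by rw [← hcol p, ← hcol q, ← col_hom r, hv, col_hom]
  by_cases hp : B.col p = c
  · obtain ⟨i, -, rfl⟩ := hl.surjOn hp
    obtain ⟨j, -, rfl⟩ := hl.surjOn (hcpq ▸ hp : B.col q = c)
    rw [hld, hld]
    exact monotone_hom u ((monotone_hom l).reflect_lt hlt).le
  · have hp' : B.col p = !c := Bool.eq_not_iff.mpr hp
    refine (hr.injOn ?_ ?_ hv).le
    · show X.col (d p) = !c
      rw [hcol, hp']
    · show X.col (d q) = !c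
      rw [hcol, ← hcpq, hp']

lemma hasLiftingProperty (hl : LSpecial c l) (hr : LSpecial (!c) r) : HasLiftingProperty l r :=
  ⟨fun {u v} sq => by
    choose d hcol hrd hld using exists_lift_apply hl hr sq.w
    have hld' (i : Fin (A.obj.len + 1)) : d (l i) = u i := (hld (l i) i rfl).symm
    let lift : B ⟶ X := mkHom ⟨d, monotone_of_lift hl hr hcol hrd hld'⟩ hcol
    exact ⟨⟨{ l := lift, fac_left := hom_ext hld', fac_right := hom_ext hrd }⟩⟩⟩

end Lifting

section Uniqueness

variable {c : Bool} {m m' : EqCat} {g : a ⟶ m} {h : m ⟶ b} {g' : a ⟶ m'} {h' : m' ⟶ b}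

lemma factorization_unique (hg : LSpecial c g) (hh : LSpecial (!c) h) (hg' : LSpecial c g')
    (hh' : LSpecial (!c) h') (w : g ≫ h = g' ≫ h') :
    (⟨m, (g, h)⟩ : Σ m : EqCat, (a ⟶ m) × (m ⟶ b)) = ⟨m', (g', h')⟩ := by
  have sq : CommSq g' g h' h := ⟨w.symm⟩
  have := hasLiftingProperty hg hh'
  have hd : IsIso sq.lift := (isIso_iff_lspecial (c := c) _).mpr
    ⟨lspecial_of_comp_left hg (by rw [sq.fac_left]; exact hg'),
      lspecial_of_comp_right hh' (by rw [sq.fac_right]; exact hh)⟩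
  obtain rfl := skeletal ⟨asIso sq.lift⟩
  have hleft := sq.fac_left
  have hright := sq.fac_right
  rw [eq_id_of_isIso sq.lift] at hleft hright
  simp only [Category.comp_id, Category.id_comp] at hleft hright
  rw [hleft, hright]

end Uniqueness

section Existence

variable (c : Bool) (f : a ⟶ b)

def midPoints : Finset (Fin (b.obj.len + 1) ×ₗ Fin (a.obj.len + 1)) :=
  Finset.univ.filter fun p =>
    if b.col (ofLex p).1 = c then f (ofLex p).2 = (ofLex p).1 else (ofLex p).2 = 0

variable {c f} in
lemma mem_midPoints {p : Fin (b.obj.len + 1) ×ₗ Fin (a.obj.len + 1)} :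
    p ∈ midPoints c f ↔
      if b.col (ofLex p).1 = c then f (ofLex p).2 = (ofLex p).1 else (ofLex p).2 = 0 := by
  simp [midPoints]

def toMid (i : Fin (a.obj.len + 1)) : Fin (b.obj.len + 1) ×ₗ Fin (a.obj.len + 1) :=
  toLex (f i, if a.col i = c then i else 0)

lemma toMid_mem (i : Fin (a.obj.len + 1)) : toMid c f i ∈ midPoints c f := by
  by_cases hi : a.col i = c <;> simp [mem_midPoints, toMid, hi]

lemma monotone_toMid : Monotone (toMid c f) := by
  intro i j hij
  rcases (monotone_hom f hij).lt_or_eq with hlt | heq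
  · exact Prod.Lex.toLex_le_toLex.mpr (Or.inl hlt)
  have hcol : a.col i = a.col j := by rw [← col_hom f, heq, col_hom]
  refine Prod.Lex.toLex_le_toLex.mpr (Or.inr ⟨heq, ?_⟩)
  by_cases hi : a.col i = c
  · simp [hi, ← hcol, hij]
  · simp [hi, ← hcol]

lemma card_midPoints_pos : 0 < (midPoints c f).card :=
  Finset.card_pos.mpr ⟨_, toMid_mem c f 0⟩

noncomputable def midIso : Fin ((midPoints c f).card - 1 + 1) ≃o midPoints c f :=
  (midPoints c f).orderIsoOfFin (Nat.succ_pred_eq_of_pos (card_midPoints_pos c f)).symm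

noncomputable def mid : EqCat where
  obj := .mk ((midPoints c f).card - 1)
  col x := b.col (ofLex (midIso c f x).1).1

noncomputable def toMidHom : a ⟶ mid c f :=
  mkHom ⟨fun i => (midIso c f).symm ⟨toMid c f i, toMid_mem c f i⟩,
      (midIso c f).symm.monotone.comp fun _ _ hij => monotone_toMid c f hij⟩
    fun i => by
      show b.col (ofLex (midIso c f ((midIso c f).symm _)).1).1 = a.col i
      simp [toMid]

noncomputable def fromMidHom : mid c f ⟶ b :=
  mkHom ⟨fun x => (ofLex (midIso c f x).1).1,
      Prod.Lex.monotone_fst_ofLex.comp ((Subtype.mono_coe _).comp (midIso c f).monotone)⟩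
    fun _ => rfl

lemma fromMidHom_symm_apply (p : midPoints c f) :
    fromMidHom c f ((midIso c f).symm p) = (ofLex p.1).1 :=
  congrArg (fun p => (ofLex p.1).1) ((midIso c f).apply_symm_apply p)

lemma toMidHom_comp_fromMidHom : toMidHom c f ≫ fromMidHom c f = f :=
  hom_ext fun _ => fromMidHom_symm_apply c f _

lemma col_mid_symm (p : midPoints c f) :
    (mid c f).col ((midIso c f).symm p) = b.col (ofLex p.1).1 := by
  simp [mid]

lemma lspecial_toMidHom : LSpecial c (toMidHom c f) := by
  refine (lspecial_iff_bijOn _).mpr ⟨mapsTo_col _ c, fun i hi j hj e => ?_, fun x hx => ?_⟩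
  · have := congrArg (fun p => (ofLex p).2) (Subtype.ext_iff.mp ((midIso c f).symm.injective e))
    simpa [toMid, hi.out, hj.out] using this
  · obtain ⟨⟨p, hp⟩, rfl⟩ := (midIso c f).symm.surjective x
    have hx : b.col (ofLex p).1 = c := (col_mid_symm c f _).symm.trans hx
    rw [mem_midPoints, if_pos hx] at hp
    have hi : a.col (ofLex p).2 = c := by rw [← col_hom f, hp, hx]
    refine ⟨_, hi, congrArg (midIso c f).symm (Subtype.ext ?_)⟩
    simp [toMid, hi, hp]

lemma lspecial_fromMidHom : LSpecial (!c) (fromMidHom c f) := by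
  refine (lspecial_iff_bijOn _).mpr ⟨mapsTo_col _ _, fun x hx y hy e => ?_, fun j hj => ?_⟩
  · obtain ⟨⟨p, hp⟩, rfl⟩ := (midIso c f).symm.surjective x
    obtain ⟨⟨q, hq⟩, rfl⟩ := (midIso c f).symm.surjective y
    have snd_eq_zero {r} (hr : r ∈ midPoints c f)
        (hrc : (mid c f).col ((midIso c f).symm ⟨r, hr⟩) = !c) : (ofLex r).2 = 0 := by
      have hrc : b.col (ofLex r).1 ≠ c := Bool.eq_not_iff.mp (by rwa [col_mid_symm] at hrc)
      simpa [hrc] using mem_midPoints.mp hr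
    congr 2
    exact ofLex.injective (Prod.ext (by simpa only [fromMidHom_symm_apply] using e)
      ((snd_eq_zero hp hx).trans (snd_eq_zero hq hy).symm))
  · have hj : b.col j = !c := hj
    have hp : toLex (j, (0 : Fin (a.obj.len + 1))) ∈ midPoints c f := by
      simp [mem_midPoints, hj]
    exact ⟨(midIso c f).symm ⟨_, hp⟩, (col_mid_symm c f _).trans hj, fromMidHom_symm_apply c f _⟩

end Existence

lemma existsUnique_factorization (c : Bool) (f : a ⟶ b) :
    ∃! p : Σ (m : EqCat), (a ⟶ m) × (m ⟶ b),
      LSpecial c p.2.1 ∧ LSpecial (!c) p.2.2 ∧ p.2.1 ≫ p.2.2 = f :=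
  ⟨⟨mid c f, toMidHom c f, fromMidHom c f⟩,
    ⟨lspecial_toMidHom c f, lspecial_fromMidHom c f, toMidHom_comp_fromMidHom c f⟩,
    fun ⟨_, _, _⟩ ⟨hg, hh, w⟩ => factorization_unique hg hh (lspecial_toMidHom c f)
      (lspecial_fromMidHom c f) (w.trans (toMidHom_comp_fromMidHom c f).symm)⟩

theorem factorizationSystem (c : Bool) :
    FactorizationSystem EqCat (fun _ _ f => LSpecial c f) (fun _ _ f => LSpecial (!c) f) where
  id_mem_left := lspecial_id c
  comp_mem_left _ _ := lspecial_comp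
  id_mem_right := lspecial_id (!c)
  comp_mem_right _ _ := lspecial_comp
  inter_iso f := (isIso_iff_lspecial f).symm
  fac f := ⟨mid c f, toMidHom c f, fromMidHom c f, lspecial_toMidHom c f,
    lspecial_fromMidHom c f, toMidHom_comp_fromMidHom c f⟩
  uniq _ M _ _ _ _ _ hl hr hl' hr' w w' := by
    obtain ⟨rfl, h⟩ := Sigma.mk.inj_iff.mp (factorization_unique hl hr hl' hr' (w.trans w'.symm))
    obtain ⟨rfl, rfl⟩ := Prod.mk.inj (eq_of_heq h)
    exact ⟨Iso.refl M, by simp, fun e _ => iso_eq_refl e⟩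

end EqCat

/-- **Statement 16.** Every morphism of `eq` factors uniquely as a `0`-special
morphism followed by a `1`-special morphism, and also uniquely as a `1`-special
morphism followed by a `0`-special one; the two classes form a factorization
system on `eq` in either order. -/
theorem stmt16 :
    (∀ {a b : EqCat} (f : a ⟶ b),
      ∃! p : Σ (m : EqCat), (a ⟶ m) × (m ⟶ b),
        LSpecial false p.2.1 ∧ LSpecial true p.2.2 ∧ p.2.1 ≫ p.2.2 = f) ∧
    (∀ {a b : EqCat} (f : a ⟶ b),
      ∃! p : Σ (m : EqCat), (a ⟶ m) × (m ⟶ b),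
        LSpecial true p.2.1 ∧ LSpecial false p.2.2 ∧ p.2.1 ≫ p.2.2 = f) ∧
    FactorizationSystem EqCat
      (fun _ _ f => LSpecial false f) (fun _ _ f => LSpecial true f) ∧
    FactorizationSystem EqCat
      (fun _ _ f => LSpecial true f) (fun _ _ f => LSpecial false f) :=
  ⟨EqCat.existsUnique_factorization false, EqCat.existsUnique_factorization true,
    EqCat.factorizationSystem false, EqCat.factorizationSystem true⟩

end Paper
end
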